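/- arXiv:2603.02831 — 10 statements merged into one kernel-verified Lean document; each statement's English description precedes it below -/
import Mathlib

section
/- If S and S' are two efficient dominating sets of a graph G, then |S| = |S'| = γ(G), where γ(G) is the domination number of G. -/
open SimpleGraph Finset
open scoped Classical

/-- Closed neighborhood of a vertex. -/
def closedNbr {V : Type*} (G : SimpleGraph V) (v : V) : Set V :=
  insert v (G.neighborSet v)

/-- `S` is an efficient dominating set: every vertex lies in the closed
neighborhood of exactly one vertex of `S`. -/
def IsEffDomSet {V : Type*} (G : SimpleGraph V) (S : Set V) : Prop :=
  ∀ v : V, ∃! u, u ∈ S ∧ v ∈ closedNbr G u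

/-- `S` is a dominating set. -/
def IsDomSet {V : Type*} (G : SimpleGraph V) (S : Set V) : Prop :=
  ∀ v : V, v ∉ S → ∃ u ∈ S, G.Adj u v

/-- The domination number. -/
noncomputable def domNumber {V : Type*} (G : SimpleGraph V) [Fintype V] : ℕ :=
  sInf {n | ∃ S : Set V, IsDomSet G S ∧ S.ncard = n}

/-- `f` is a `[k]`-Roman dominating function on `G`. -/
noncomputable def IsKRDF {V : Type*} (G : SimpleGraph V) [Fintype V] (k : ℕ) (f : V → ℕ) : Prop :=
  (∀ v, f v ≤ k + 1) ∧
  ∀ v : V, f v < k →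
    f v + ∑ u ∈ univ.filter (fun u => G.Adj v u), f u ≥
      k + (univ.filter (fun u => G.Adj v u ∧ 0 < f u)).card

/-- The `[k]`-Roman domination number. -/
noncomputable def kRoman {V : Type*} (G : SimpleGraph V) [Fintype V] (k : ℕ) : ℕ :=
  sInf {w | ∃ f : V → ℕ, IsKRDF G k f ∧ ∑ v, f v = w}

/-- `S` is a packing: closed neighborhoods of vertices in `S` are pairwise disjoint. -/
def IsPacking {V : Type*} (G : SimpleGraph V) (S : Set V) : Prop :=
  S.Pairwise fun u v => Disjoint (closedNbr G u) (closedNbr G v)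

/-- The packing number. -/
noncomputable def packingNumber {V : Type*} (G : SimpleGraph V) [Fintype V] : ℕ :=
  sSup {n | ∃ S : Set V, IsPacking G S ∧ S.ncard = n}

lemma eff_isDom {V : Type*} (G : SimpleGraph V) (S : Set V)
    (hS : IsEffDomSet G S) : IsDomSet G S := by
  intro v hv
  obtain ⟨u, ⟨huS, hvc⟩, _⟩ := hS v
  rcases hvc with h | h
  · exact absurd (h ▸ huS) hv
  · exact ⟨u, huS, h⟩

lemma mem_closedNbr_comm {V : Type*} (G : SimpleGraph V) {u v : V} :
    u ∈ closedNbr G v ↔ v ∈ closedNbr G u := by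
  unfold closedNbr
  simp only [Set.mem_insert_iff, SimpleGraph.mem_neighborSet]
  constructor <;> rintro (h | h)
  · exact Or.inl h.symm
  · exact Or.inr h.symm
  · exact Or.inl h.symm
  · exact Or.inr h.symm

lemma eff_card_le {V : Type*} [Fintype V] (G : SimpleGraph V) (S D : Set V)
    (hS : IsEffDomSet G S) (hD : IsDomSet G D) : S.ncard ≤ D.ncard := by
  have hex : ∀ u ∈ S, ∃ w, w ∈ D ∧ w ∈ closedNbr G u := by
    intro u _
    by_cases hu : u ∈ D
    · exact ⟨u, hu, Set.mem_insert _ _⟩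
    · obtain ⟨w, hwD, hadj⟩ := hD u hu
      exact ⟨w, hwD, (mem_closedNbr_comm G).mpr (Set.mem_insert_iff.mpr (Or.inr hadj))⟩
  choose f hfD hfc using hex
  classical
  set g : V → V := fun u => if h : u ∈ S then f u h else u with hg
  apply Set.ncard_le_ncard_of_injOn g
  · intro u hu
    simp only [hg, dif_pos hu]
    exact hfD u hu
  · intro u hu v hv huv
    simp only [hg, dif_pos hu, dif_pos hv] at huv
    obtain ⟨x, _, hux⟩ := hS (f u hu)
    have h1 : u = x := hux u ⟨hu, hfc u hu⟩
    have h2 : v = x := hux v ⟨hv, huv ▸ hfc v hv⟩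
    exact h1.trans h2.symm

theorem stmt0 {V : Type*} [Fintype V] (G : SimpleGraph V) (S S' : Set V)
    (hS : IsEffDomSet G S) (hS' : IsEffDomSet G S') :
    S.ncard = S'.ncard ∧ S'.ncard = domNumber G := by
  have key : ∀ T : Set V, IsEffDomSet G T → T.ncard = domNumber G := by
    intro T hT
    have h1 : domNumber G ≤ T.ncard :=
      Nat.sInf_le ⟨T, eff_isDom G T hT, rfl⟩
    have h2 : T.ncard ≤ domNumber G := by
      refine le_csInf ⟨T.ncard, ⟨T, eff_isDom G T hT, rfl⟩⟩ ?_
      rintro n ⟨D, hD, rfl⟩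
      exact eff_card_le G T D hT hD
    exact le_antisymm h2 h1
  rw [key S hS, key S' hS']
  exact ⟨rfl, rfl⟩
end

section
/- For integers m, n divisible by 5 with m, n ≥ 5, the toroidal grid C_m □ C_n satisfies γ_{[k]R}(C_m □ C_n) = (k+1)·mn/5 for every k ≥ 1. -/
open SimpleGraph Finset
open scoped Classical

/-!
Lower bound, by discharging. Call `v` deficient when `f(N[v]) ≤ k`. A deficient vertex has value
`k` and only zero neighbours, so a vertex `v` next to a deficient one has `f v = 0` and (else
`f(N[v]) = k`) at least two positive neighbours, whence `f(N[v]) - (k + 1)` is at least `1 / r`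
times the number of its deficient neighbours. Every deficient vertex has `r` neighbours, so summing
over the vertices of an `r`-regular graph gives `(r + 1) ∑ f = ∑ f(N[v]) ≥ (k + 1) |V|`.

Upper bound: `k + 1` times the indicator of a dominating set `S` is a `[k]`-Roman dominating
function. On `C_m □ C_n` the fibres of `(i, j) ↦ i + 2j ∈ ZMod 5` (well defined since `5 ∣ m, n`)
are dominating sets, and one of them has at most `mn / 5` vertices.
-/

namespace SimpleGraph

variable {V : Type*} [Fintype V] {G : SimpleGraph V} {r k : ℕ}

theorem IsRegularOfDegree.card_filter_adj [G.LocallyFinite] (hG : G.IsRegularOfDegree r)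
    (v : V) : #{u | G.Adj v u} = r := by
  rw [← hG v, ← card_neighborFinset_eq_degree]
  congr 1
  ext
  simp

theorem IsRegularOfDegree.sum_sum_filter_adj [G.LocallyFinite] (hG : G.IsRegularOfDegree r)
    (g : V → ℕ) : ∑ v, ∑ u ∈ {u | G.Adj v u}, g u = r * ∑ v, g v := by
  simp_rw [sum_filter, mul_sum]
  rw [sum_comm]
  refine sum_congr rfl fun u _ => ?_
  simp_rw [G.adj_comm _ u, ← sum_filter, sum_const, hG.card_filter_adj, smul_eq_mul]

/-- `f(N[v])`. -/
noncomputable def closedNbrWeight (G : SimpleGraph V) (f : V → ℕ) (v : V) : ℕ :=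
  f v + ∑ u ∈ {u | G.Adj v u}, f u

theorem IsRegularOfDegree.sum_closedNbrWeight [G.LocallyFinite] (hG : G.IsRegularOfDegree r)
    (f : V → ℕ) : ∑ v, closedNbrWeight G f v = (r + 1) * ∑ v, f v := by
  simp only [closedNbrWeight, sum_add_distrib, hG.sum_sum_filter_adj]
  ring

namespace IsKRDF

variable {f : V → ℕ} {v w : V}

theorem eq_of_closedNbrWeight_le (hf : IsKRDF G k f) (hv : closedNbrWeight G f v ≤ k) :
    f v = k ∧ ∀ u, G.Adj v u → f u = 0 := by
  unfold closedNbrWeight at hv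
  have hnbr : ∀ u, G.Adj v u → f u = 0 := by
    intro u hu
    by_contra hu0
    rcases lt_or_ge (f v) k with hlt | hge
    · have hpos : 0 < #{u | G.Adj v u ∧ 0 < f u} :=
        card_pos.2 ⟨u, by simp [hu, Nat.pos_of_ne_zero hu0]⟩
      have := hf.2 v hlt
      omega
    · have : f u ≤ ∑ u ∈ {u | G.Adj v u}, f u := single_le_sum (by simp) (by simp [hu])
      omega
  have hsum : ∑ u ∈ {u | G.Adj v u}, f u = 0 := sum_eq_zero (by simpa using hnbr)
  refine ⟨?_, hnbr⟩
  have := hf.2 v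
  omega

theorem two_le_card_adj_pos (hf : IsKRDF G k f) (hk : 1 ≤ k) (hvw : G.Adj v w)
    (hw : closedNbrWeight G f w ≤ k) (hv : k < closedNbrWeight G f v) :
    2 ≤ #{u | G.Adj v u ∧ 0 < f u} := by
  obtain ⟨hfw, hzero⟩ := hf.eq_of_closedNbrWeight_le hw
  have hw_mem : w ∈ ({u | G.Adj v u ∧ 0 < f u} : Finset V) := by simp [hvw]; omega
  by_contra! hlt
  have hsum : ∑ u ∈ {u | G.Adj v u}, f u = f w := by
    refine sum_eq_single_of_mem w (by simp [hvw]) fun u hu huw => ?_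
    by_contra hu0
    have hu_mem : u ∈ ({u | G.Adj v u ∧ 0 < f u} : Finset V) := by
      simp only [mem_filter, mem_univ, true_and] at hu ⊢
      exact ⟨hu, Nat.pos_of_ne_zero hu0⟩
    exact huw (card_le_one.1 (by omega) u hu_mem w hw_mem)
  have := hzero v hvw.symm
  unfold closedNbrWeight at hv
  omega

theorem discharge_le [G.LocallyFinite] (hf : IsKRDF G k f) (hk : 1 ≤ k)
    (hG : G.IsRegularOfDegree r) (v : V) :
    r * (k + 1) + #{u | G.Adj v u ∧ closedNbrWeight G f u ≤ k} ≤
      r * closedNbrWeight G f v + r * (if closedNbrWeight G f v ≤ k then 1 else 0) := by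
  split_ifs with hv
  · obtain ⟨hfv, hzero⟩ := hf.eq_of_closedNbrWeight_le hv
    have hB : #{u | G.Adj v u ∧ closedNbrWeight G f u ≤ k} = 0 := by
      refine card_eq_zero.2 (filter_eq_empty_iff.2 fun u _ ⟨hvu, hu⟩ => ?_)
      have := (hf.eq_of_closedNbrWeight_le hu).1
      have := hzero u hvu
      omega
    have : k ≤ closedNbrWeight G f v := hfv ▸ Nat.le_add_right _ _
    rw [hB]
    nlinarith
  · push Not at hv
    obtain hB | ⟨w, hw⟩ :=
      (filter (fun u => G.Adj v u ∧ closedNbrWeight G f u ≤ k) univ).eq_empty_or_nonempty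
    · rw [hB, card_empty]
      nlinarith
    simp only [mem_filter, mem_univ, true_and] at hw
    have hP := hf.two_le_card_adj_pos hk hw.1 hw.2 hv
    have hfv : f v = 0 := (hf.eq_of_closedNbrWeight_le hw.2).2 v hw.1.symm
    have hF : k + #{u | G.Adj v u ∧ 0 < f u} ≤ closedNbrWeight G f v := hf.2 v (by omega)
    have hBP :
        #{u | G.Adj v u ∧ closedNbrWeight G f u ≤ k} ≤ #{u | G.Adj v u ∧ 0 < f u} := by
      refine card_le_card (monotone_filter_right _ fun u _ hu => ⟨hu.1, ?_⟩)
      have := (hf.eq_of_closedNbrWeight_le hu.2).1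
      omega
    have hPr : #{u | G.Adj v u ∧ 0 < f u} ≤ r :=
      hG.card_filter_adj v ▸ card_le_card (monotone_filter_right _ fun _ _ hu => hu.1)
    nlinarith

theorem card_mul_le [G.LocallyFinite] (hf : IsKRDF G k f) (hk : 1 ≤ k)
    (hG : G.IsRegularOfDegree r) (hr : 0 < r) :
    (k + 1) * Fintype.card V ≤ (r + 1) * ∑ v, f v := by
  have hcount (v : V) : #{u | G.Adj v u ∧ closedNbrWeight G f u ≤ k} =
      ∑ u ∈ {u | G.Adj v u}, if closedNbrWeight G f u ≤ k then 1 else 0 := by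
    rw [← filter_filter, card_filter]
  have hsum := sum_le_sum fun v (_ : v ∈ univ) => hf.discharge_le hk hG v
  simp only [sum_add_distrib, ← mul_sum, hcount, hG.sum_sum_filter_adj,
    hG.sum_closedNbrWeight, sum_const, card_univ, smul_eq_mul] at hsum
  refine Nat.le_of_mul_le_mul_left ?_ hr
  linarith

end IsKRDF

theorem exists_isKRDF_sum_eq_kRoman (G : SimpleGraph V) (k : ℕ) :
    ∃ f, IsKRDF G k f ∧ ∑ v, f v = kRoman G k :=
  Nat.sInf_mem (s := {w | ∃ f, IsKRDF G k f ∧ ∑ v, f v = w})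
    ⟨_, fun _ => k + 1, ⟨fun _ => le_rfl, fun _ hv => by simp at hv⟩, rfl⟩

theorem IsRegularOfDegree.card_mul_le_kRoman [G.LocallyFinite] (hG : G.IsRegularOfDegree r)
    (hr : 0 < r) (hk : 1 ≤ k) : (k + 1) * Fintype.card V ≤ (r + 1) * kRoman G k := by
  obtain ⟨f, hf, hsum⟩ := exists_isKRDF_sum_eq_kRoman G k
  exact hsum ▸ hf.card_mul_le hk hG hr

theorem IsDomSet.isKRDF_ite {S : Finset V} (hS : IsDomSet G S) :
    IsKRDF G k fun v => if v ∈ S then k + 1 else 0 := by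
  set f : V → ℕ := fun v => if v ∈ S then k + 1 else 0
  have hfS (u : V) : 0 < f u → f u = k + 1 := by simp only [f]; split_ifs <;> omega
  refine ⟨fun v => by simp only [f]; split_ifs <;> omega, fun v hv => ?_⟩
  obtain ⟨u, huS, huv⟩ := hS v fun hvS => by simp [f, Finset.mem_coe.1 hvS] at hv
  have hP : 0 < #{u | G.Adj v u ∧ 0 < f u} :=
    card_pos.2 ⟨u, by simp [f, huv.symm, Finset.mem_coe.1 huS]⟩
  have hsum : #{u | G.Adj v u ∧ 0 < f u} * (k + 1) ≤ ∑ u ∈ {u | G.Adj v u}, f u :=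
    calc #{u | G.Adj v u ∧ 0 < f u} * (k + 1)
        = ∑ u ∈ {u | G.Adj v u ∧ 0 < f u}, f u := by
          rw [sum_congr rfl fun u hu => hfS u (mem_filter.1 hu).2.2, sum_const, smul_eq_mul]
      _ ≤ ∑ u ∈ {u | G.Adj v u}, f u :=
          sum_le_sum_of_subset (monotone_filter_right _ fun _ _ hu => hu.1)
  nlinarith

theorem kRoman_le_of_isDomSet {S : Finset V} (hS : IsDomSet G S) :
    kRoman G k ≤ (k + 1) * #S :=
  Nat.sInf_le ⟨_, hS.isKRDF_ite, by simp [mul_comm]⟩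

theorem cycleGraph_isRegularOfDegree_two {n : ℕ} (hn : 3 ≤ n) :
    (cycleGraph n).IsRegularOfDegree 2 := by
  obtain ⟨n, rfl⟩ := Nat.exists_eq_add_of_le' hn
  exact fun _ => cycleGraph_degree_three_le

theorem cycleGraph_sub_one_adj {n : ℕ} (a : Fin (n + 2)) : (cycleGraph (n + 2)).Adj (a - 1) a :=
  cycleGraph_adj.2 (.inr (sub_sub_cancel _ _))

theorem cycleGraph_add_one_adj {n : ℕ} (a : Fin (n + 2)) : (cycleGraph (n + 2)).Adj (a + 1) a :=
  cycleGraph_adj.2 (.inl (add_sub_cancel_left _ _))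

theorem IsRegularOfDegree.boxProd {α β : Type*} {G : SimpleGraph α} {H : SimpleGraph β}
    [G.LocallyFinite] [H.LocallyFinite] {a b : ℕ}
    (hG : G.IsRegularOfDegree a) (hH : H.IsRegularOfDegree b) :
    (G □ H).IsRegularOfDegree (a + b) := fun x => by
  rw [degree_boxProd, hG, hH]

end SimpleGraph

theorem Fintype.exists_mul_card_fiber_le {α β : Type*} [Fintype α] [Fintype β] [Nonempty β]
    [DecidableEq β] (f : α → β) :
    ∃ y, Fintype.card β * #{x | f x = y} ≤ Fintype.card α := by
  have hβ : (0 : ℚ) < Fintype.card β := by exact_mod_cast Fintype.card_pos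
  obtain ⟨y, hy⟩ := Fintype.exists_card_fiber_le_of_card_le_nsmul (f := f)
    (b := (Fintype.card α : ℚ) / Fintype.card β)
    (by rw [nsmul_eq_mul, mul_div_cancel₀ _ hβ.ne'])
  refine ⟨y, ?_⟩
  rw [le_div_iff₀ hβ] at hy
  exact_mod_cast (mul_comm _ _).trans_le hy

theorem Fin.natCast_val_add_one {m d : ℕ} [NeZero m] (h : d ∣ m) (a : Fin m) :
    (((a + 1 : Fin m) : ℕ) : ZMod d) = (a : ℕ) + 1 := by
  have hmod (x : ℕ) : ((x % m : ℕ) : ZMod d) = x :=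
    (ZMod.natCast_eq_natCast_iff' _ _ _).2 (Nat.mod_mod_of_dvd x h)
  rw [Fin.val_add, hmod, Nat.cast_add, Fin.val_one', hmod, Nat.cast_one]

theorem Fin.natCast_val_sub_one {m d : ℕ} [NeZero m] (h : d ∣ m) (a : Fin m) :
    (((a - 1 : Fin m) : ℕ) : ZMod d) = (a : ℕ) - 1 := by
  rw [eq_sub_iff_add_eq, ← Fin.natCast_val_add_one h, sub_add_cancel]

namespace SimpleGraph

/-- The closed neighbourhood of `(i, j)` has colours `i + 2j + {0, ±1, ±2}`, i.e. all of
`ZMod 5`. -/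
def torusColour {m n : ℕ} (v : Fin m × Fin n) : ZMod 5 :=
  ((v.1 : ℕ) : ZMod 5) + 2 * ((v.2 : ℕ) : ZMod 5)

theorem isDomSet_torusColour_fiber {m n : ℕ} (hm : 5 ∣ m) (hn : 5 ∣ n) (c : ZMod 5) :
    IsDomSet ((cycleGraph m).boxProd (cycleGraph n))
      (({v | torusColour v = c} : Finset (Fin m × Fin n)) : Set (Fin m × Fin n)) := by
  rintro ⟨i, j⟩ hv
  obtain ⟨m, rfl⟩ : ∃ m', m = m' + 2 := ⟨m - 2, by have := Nat.le_of_dvd i.pos hm; omega⟩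
  obtain ⟨n, rfl⟩ : ∃ n', n = n' + 2 := ⟨n - 2, by have := Nat.le_of_dvd j.pos hn; omega⟩
  simp only [mem_coe, mem_filter, mem_univ, true_and] at hv ⊢
  have hd : ∀ d : ZMod 5, d ≠ 0 → d = 1 ∨ d = -1 ∨ d = 2 ∨ d = -2 := by decide
  rcases hd _ (sub_ne_zero.2 hv) with hd | hd | hd | hd <;> unfold torusColour at hd ⊢
  · refine ⟨(i - 1, j), ?_, boxProd_adj.2 (.inl ⟨cycleGraph_sub_one_adj i, rfl⟩)⟩
    rw [Fin.natCast_val_sub_one hm]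
    linear_combination hd
  · refine ⟨(i + 1, j), ?_, boxProd_adj.2 (.inl ⟨cycleGraph_add_one_adj i, rfl⟩)⟩
    rw [Fin.natCast_val_add_one hm]
    linear_combination hd
  · refine ⟨(i, j - 1), ?_, boxProd_adj.2 (.inr ⟨cycleGraph_sub_one_adj j, rfl⟩)⟩
    rw [Fin.natCast_val_sub_one hn]
    linear_combination hd
  · refine ⟨(i, j + 1), ?_, boxProd_adj.2 (.inr ⟨cycleGraph_add_one_adj j, rfl⟩)⟩
    rw [Fin.natCast_val_add_one hn]
    linear_combination hd

end SimpleGraph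

theorem stmt2 (m n k : ℕ) (hm5 : 5 ∣ m) (hn5 : 5 ∣ n) (hm : 5 ≤ m) (hn : 5 ≤ n)
    (hk : 1 ≤ k) :
    (kRoman ((cycleGraph m).boxProd (cycleGraph n)) k : ℚ) = (k + 1) * m * n / 5 := by
  have hreg : ((cycleGraph m).boxProd (cycleGraph n)).IsRegularOfDegree (2 + 2) :=
    (cycleGraph_isRegularOfDegree_two (by omega)).boxProd
      (cycleGraph_isRegularOfDegree_two (by omega))
  have hlow := hreg.card_mul_le_kRoman (by norm_num) hk
  obtain ⟨c, hc⟩ := Fintype.exists_mul_card_fiber_le (torusColour (m := m) (n := n))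
  have hup := kRoman_le_of_isDomSet (k := k) (isDomSet_torusColour_fiber hm5 hn5 c)
  simp only [ZMod.card, Fintype.card_prod, Fintype.card_fin] at hlow hc
  have key : 5 * kRoman ((cycleGraph m).boxProd (cycleGraph n)) k = (k + 1) * m * n := by
    nlinarith
  rw [eq_div_iff (by norm_num), mul_comm]
  exact_mod_cast key
end

section
/- For every integer t ≥ 1, the cylindrical graph C_{4t} □ P_2 admits an efficient dominating set, namely S = {(i,0) : i ≡ 0 (mod 4)} ∪ {(i,1) : i ≡ 2 (mod 4)}. -/
open SimpleGraph Finset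
open scoped Classical

theorem stmt4 (t : ℕ) (ht : 1 ≤ t) :
    IsEffDomSet ((cycleGraph (4 * t)).boxProd (pathGraph 2))
      {p : Fin (4 * t) × Fin 2 |
        ((p.2 : ℕ) = 0 ∧ (p.1 : ℕ) % 4 = 0) ∨ ((p.2 : ℕ) = 1 ∧ (p.1 : ℕ) % 4 = 2)} := by
  haveI : NeZero (4 * t) := ⟨by omega⟩
  have h4 : (4 : ℕ) ∣ 4 * t := ⟨t, rfl⟩
  have hval1 : ((1 : Fin (4 * t)) : ℕ) = 1 := by
    rcases t with _ | t
    · omega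
    · rw [Fin.val_one']
      exact Nat.mod_eq_of_lt (by omega)
  have hadd : ∀ i : Fin (4 * t), ((i + 1 : Fin (4 * t)) : ℕ) % 4 = ((i : ℕ) + 1) % 4 := by
    intro i
    rw [Fin.val_add, hval1, Nat.mod_mod_of_dvd _ h4]
  have hsub : ∀ i : Fin (4 * t), ((i - 1 : Fin (4 * t)) : ℕ) % 4 = ((i : ℕ) + 3) % 4 := by
    intro i
    have h := hadd (i - 1)
    rw [sub_add_cancel] at h
    omega
  have e : ∀ a b : Fin (4 * t), ((a - b : Fin (4 * t)) : ℕ) = 1 ↔ a = b + 1 := by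
    intro a b
    rw [← hval1, Fin.val_eq_val, sub_eq_iff_eq_add']
  have hcyc : ∀ a b : Fin (4 * t),
      (cycleGraph (4 * t)).Adj a b ↔ a = b + 1 ∨ a = b - 1 := by
    intro a b
    rw [cycleGraph_adj']
    constructor
    · rintro (h | h)
      · exact Or.inl ((e a b).1 h)
      · exact Or.inr (eq_sub_iff_add_eq.2 ((e b a).1 h).symm)
    · rintro (h | h)
      · exact Or.inl ((e a b).2 h)
      · exact Or.inr ((e b a).2 (eq_sub_iff_add_eq.1 h).symm)
  have hc : ∀ u v : Fin (4 * t) × Fin 2,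
      v ∈ closedNbr ((cycleGraph (4 * t)).boxProd (pathGraph 2)) u ↔
      (((v.1 : ℕ) = (u.1 : ℕ) ∧ (v.2 : ℕ) = (u.2 : ℕ)) ∨
       (((u.1 : ℕ) = ((v.1 + 1 : Fin (4 * t)) : ℕ) ∨
         (u.1 : ℕ) = ((v.1 - 1 : Fin (4 * t)) : ℕ)) ∧ (u.2 : ℕ) = (v.2 : ℕ)) ∨
       (((u.2 : ℕ) + 1 = (v.2 : ℕ) ∨ (v.2 : ℕ) + 1 = (u.2 : ℕ)) ∧
         (u.1 : ℕ) = (v.1 : ℕ))) := by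
    intro u v
    simp only [closedNbr, Set.mem_insert_iff, SimpleGraph.mem_neighborSet, boxProd_adj,
      hcyc, pathGraph_adj, Prod.ext_iff, Fin.ext_iff]
  have hone : ((1 : Fin 2) : ℕ) = 1 := rfl
  have hzero : ((0 : Fin 2) : ℕ) = 0 := rfl
  rintro ⟨i, j⟩
  have hjlt : (j : ℕ) < 2 := j.isLt
  have e1 := hadd i
  have e2 := hsub i
  obtain hj0 | hj1 : (j : ℕ) = 0 ∨ (j : ℕ) = 1 := by omega
  all_goals obtain hr | hr | hr | hr :
      (i : ℕ) % 4 = 0 ∨ (i : ℕ) % 4 = 1 ∨ (i : ℕ) % 4 = 2 ∨ (i : ℕ) % 4 = 3 := by omega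
  · refine ⟨(i, j), ⟨?_, ?_⟩, ?_⟩
    · show _ ∨ _
      exact Or.inl ⟨hj0, hr⟩
    · rw [hc]
      exact Or.inl ⟨rfl, rfl⟩
    · rintro ⟨a, b⟩ ⟨huS, hun⟩
      rw [hc] at hun
      simp only [Set.mem_setOf_eq] at huS
      dsimp only at huS hun
      have hb2 : (b : ℕ) < 2 := b.isLt
      refine Prod.ext (Fin.ext ?_) (Fin.ext ?_) <;> dsimp only <;> omega
  · refine ⟨(i - 1, j), ⟨?_, ?_⟩, ?_⟩
    · show _ ∨ _
      exact Or.inl ⟨hj0, by dsimp only; omega⟩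
    · rw [hc]
      exact Or.inr (Or.inl ⟨Or.inr rfl, rfl⟩)
    · rintro ⟨a, b⟩ ⟨huS, hun⟩
      rw [hc] at hun
      simp only [Set.mem_setOf_eq] at huS
      dsimp only at huS hun
      have hb2 : (b : ℕ) < 2 := b.isLt
      refine Prod.ext (Fin.ext ?_) (Fin.ext ?_) <;> dsimp only <;> omega
  · refine ⟨(i, (1 : Fin 2)), ⟨?_, ?_⟩, ?_⟩
    · show _ ∨ _
      exact Or.inr ⟨hone, hr⟩
    · rw [hc]
      exact Or.inr (Or.inr ⟨Or.inr (by dsimp only; omega), rfl⟩)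
    · rintro ⟨a, b⟩ ⟨huS, hun⟩
      rw [hc] at hun
      simp only [Set.mem_setOf_eq] at huS
      dsimp only at huS hun
      have hb2 : (b : ℕ) < 2 := b.isLt
      refine Prod.ext (Fin.ext ?_) (Fin.ext ?_) <;> dsimp only <;> omega
  · refine ⟨(i + 1, j), ⟨?_, ?_⟩, ?_⟩
    · show _ ∨ _
      exact Or.inl ⟨hj0, by dsimp only; omega⟩
    · rw [hc]
      exact Or.inr (Or.inl ⟨Or.inl rfl, rfl⟩)
    · rintro ⟨a, b⟩ ⟨huS, hun⟩
      rw [hc] at hun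
      simp only [Set.mem_setOf_eq] at huS
      dsimp only at huS hun
      have hb2 : (b : ℕ) < 2 := b.isLt
      refine Prod.ext (Fin.ext ?_) (Fin.ext ?_) <;> dsimp only <;> omega
  · refine ⟨(i, (0 : Fin 2)), ⟨?_, ?_⟩, ?_⟩
    · show _ ∨ _
      exact Or.inl ⟨hzero, hr⟩
    · rw [hc]
      exact Or.inr (Or.inr ⟨Or.inl (by dsimp only; omega), rfl⟩)
    · rintro ⟨a, b⟩ ⟨huS, hun⟩
      rw [hc] at hun
      simp only [Set.mem_setOf_eq] at huS
      dsimp only at huS hun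
      have hb2 : (b : ℕ) < 2 := b.isLt
      refine Prod.ext (Fin.ext ?_) (Fin.ext ?_) <;> dsimp only <;> omega
  · refine ⟨(i + 1, j), ⟨?_, ?_⟩, ?_⟩
    · show _ ∨ _
      exact Or.inr ⟨hj1, by dsimp only; omega⟩
    · rw [hc]
      exact Or.inr (Or.inl ⟨Or.inl rfl, rfl⟩)
    · rintro ⟨a, b⟩ ⟨huS, hun⟩
      rw [hc] at hun
      simp only [Set.mem_setOf_eq] at huS
      dsimp only at huS hun
      have hb2 : (b : ℕ) < 2 := b.isLt
      refine Prod.ext (Fin.ext ?_) (Fin.ext ?_) <;> dsimp only <;> omega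
  · refine ⟨(i, j), ⟨?_, ?_⟩, ?_⟩
    · show _ ∨ _
      exact Or.inr ⟨hj1, hr⟩
    · rw [hc]
      exact Or.inl ⟨rfl, rfl⟩
    · rintro ⟨a, b⟩ ⟨huS, hun⟩
      rw [hc] at hun
      simp only [Set.mem_setOf_eq] at huS
      dsimp only at huS hun
      have hb2 : (b : ℕ) < 2 := b.isLt
      refine Prod.ext (Fin.ext ?_) (Fin.ext ?_) <;> dsimp only <;> omega
  · refine ⟨(i - 1, j), ⟨?_, ?_⟩, ?_⟩
    · show _ ∨ _
      exact Or.inr ⟨hj1, by dsimp only; omega⟩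
    · rw [hc]
      exact Or.inr (Or.inl ⟨Or.inr rfl, rfl⟩)
    · rintro ⟨a, b⟩ ⟨huS, hun⟩
      rw [hc] at hun
      simp only [Set.mem_setOf_eq] at huS
      dsimp only at huS hun
      have hb2 : (b : ℕ) < 2 := b.isLt
      refine Prod.ext (Fin.ext ?_) (Fin.ext ?_) <;> dsimp only <;> omega
end

section
/- For all integers m ≥ 3 and n ≥ 1, the cylindrical graph C_m □ P_n admits an efficient dominating set if and only if either n = 1 and m ≡ 0 (mod 3), or n = 2 and m ≡ 0 (mod 4). -/
open SimpleGraph Finset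
open scoped Classical

/-!
An efficient dominating set `S` is a perfect code: the closed neighbourhoods of its vertices
partition the vertex set, so two code vertices are at distance at least `3`. Such a code meets the
bottom row, say at `(i, 0)`. For `n = 1` the vertex `(i + 2, 0)` can only be covered by
`(i + 3, 0)`, so the bottom row of the code is invariant under translation by `3`. For `n ≥ 2`,
covering `(i + 2, 0)` by `(i + 3, 0)` would force `(i + 1, 2)` and `(i + 2, 2)` into the code, so
`(i + 2, 1)` covers it, and then `(i + 3, 0)` is covered by `(i + 4, 0)`: the bottom row is
invariant under translation by `4`. Invariance under translation by `d` gives invariance under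
translation by `gcd d m`, which must be `d` because code vertices in one row are at least `3`
apart; hence `d ∣ m`. For `n ≥ 3` the pattern in rows `0` and `1` forces the adjacent vertices
`(i + 3, 3)` and `(i + 4, 3)` into the code. Conversely, `{(i, 0) | 3 ∣ i}` and
`{(i, j) | i ≡ 2 j [MOD 4]}` are efficient dominating sets.
-/

namespace IsEffDomSet

variable {V : Type*} {G : SimpleGraph V} {S : Set V}

theorem exists_mem_closedNbr (hS : IsEffDomSet G S) (v : V) : ∃ u ∈ S, v ∈ closedNbr G u :=
  (hS v).exists.imp fun _ ⟨hu, hv⟩ => ⟨hu, hv⟩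

theorem eq_of_mem_closedNbr (hS : IsEffDomSet G S) {u w v : V} (hu : u ∈ S) (hw : w ∈ S)
    (hvu : v ∈ closedNbr G u) (hvw : v ∈ closedNbr G w) : u = w :=
  (hS v).unique ⟨hu, hvu⟩ ⟨hw, hvw⟩

end IsEffDomSet

section Fin

open Fin.CommRing

variable {m : ℕ} [NeZero m]

theorem Fin.self_ne_add_one (hm : 2 ≤ m) (a : Fin m) : a ≠ a + 1 := by
  simp [Fin.ext_iff, Nat.mod_eq_of_lt (show 1 < m by omega)]

theorem Fin.self_ne_add_two (hm : 3 ≤ m) (a : Fin m) : a ≠ a + 2 := by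
  simp [Fin.ext_iff, Nat.mod_eq_of_lt (show 2 < m by omega)]

theorem Fin.val_add_one_mod_of_dvd (hm : 2 ≤ m) {d : ℕ} (hd : d ∣ m) (a : Fin m) :
    (a + 1).val % d = (a.val + 1) % d := by
  rw [Fin.val_add, Fin.val_one', Nat.mod_eq_of_lt (show 1 < m by omega), Nat.mod_mod_of_dvd _ hd]

theorem Fin.apply_add_gcd {P : Fin m → Prop} {d : ℕ}
    (hP : ∀ i, P i → P (i + d)) {i : Fin m} (hi : P i) : P (i + (d.gcd m : ℕ)) := by
  have hiter : ∀ k : ℕ, P (i + (d * k : ℕ)) := by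
    intro k
    induction k with
    | zero => simpa using hi
    | succ k ih => simpa [mul_add, add_assoc] using hP _ ih
  obtain ⟨k, hk⟩ : ∃ k, d * k ≡ d.gcd m [MOD m] := by
    rcases (Nat.gcd_le_right (m := d) (NeZero.pos m)).lt_or_eq with h | h
    · obtain ⟨k, -, hk⟩ := Nat.exists_mul_mod_eq_gcd h
      exact ⟨k, hk.trans (Nat.mod_eq_of_lt h).symm⟩
    · exact ⟨0, by simp [h, Nat.ModEq]⟩
  simpa [(CharP.natCast_eq_natCast (Fin m) m).2 hk] using hiter k

end Fin

namespace Cylinder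

open Fin.CommRing

variable {m n : ℕ}

-- Rows are indexed by `ℕ`, so that the rows next to `j` are `j + 1` and `j - 1`;
-- rows `j ≥ n` are empty.
def CodeAt (S : Set (Fin m × Fin n)) (i : Fin m) (j : ℕ) : Prop :=
  ∃ hj : j < n, (i, ⟨j, hj⟩) ∈ S

theorem CodeAt.lt {S : Set (Fin m × Fin n)} {i : Fin m} {j : ℕ} (h : CodeAt S i j) : j < n :=
  h.1

variable [NeZero m]

theorem cycleGraph_adj_iff (hm : 2 ≤ m) {a b : Fin m} :
    (cycleGraph m).Adj a b ↔ a = b + 1 ∨ a = b - 1 := by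
  obtain ⟨k, rfl⟩ : ∃ k, m = k + 2 := ⟨m - 2, by omega⟩
  rw [cycleGraph_adj, sub_eq_iff_eq_add, sub_eq_iff_eq_add, eq_sub_iff_add_eq, eq_comm (a := b),
    add_comm 1 b, add_comm 1 a]

theorem mem_closedNbr_iff {a i : Fin m} {b j : Fin n} (hm : 2 ≤ m) :
    (i, j) ∈ closedNbr (cycleGraph m □ pathGraph n) (a, b) ↔
      (b = j ∧ (a = i ∨ a = i + 1 ∨ a = i - 1)) ∨
        (a = i ∧ (b.val = j.val + 1 ∨ b.val + 1 = j.val)) := by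
  simp only [closedNbr, Set.mem_insert_iff, mem_neighborSet, boxProd_adj, cycleGraph_adj_iff hm,
    pathGraph_adj, Prod.ext_iff]
  grind

variable {S : Set (Fin m × Fin n)}

-- For `j = 0` the last disjunct repeats the first, as `0 - 1 = 0`.
theorem codeAt_cover (hm : 2 ≤ m) (hS : IsEffDomSet (cycleGraph m □ pathGraph n) S) (i : Fin m)
    {j : ℕ} (hj : j < n) :
    CodeAt S i j ∨ CodeAt S (i + 1) j ∨ CodeAt S (i - 1) j ∨ CodeAt S i (j + 1) ∨
      CodeAt S i (j - 1) := by
  obtain ⟨⟨a, b⟩, hab, hv⟩ := hS.exists_mem_closedNbr (i, ⟨j, hj⟩)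
  rcases (mem_closedNbr_iff hm).1 hv with ⟨rfl, rfl | rfl | rfl⟩ | ⟨rfl, hb | hb⟩
  · exact .inl ⟨hj, hab⟩
  · exact .inr <| .inl ⟨hj, hab⟩
  · exact .inr <| .inr <| .inl ⟨hj, hab⟩
  · refine .inr <| .inr <| .inr <| .inl ?_
    rw [show j + 1 = b.val from hb.symm]
    exact ⟨b.2, hab⟩
  · refine .inr <| .inr <| .inr <| .inr ?_
    rw [show j - 1 = b.val by simp only at hb; omega]
    exact ⟨b.2, hab⟩

section Packing

variable {a b : Fin m} {j : ℕ}

theorem not_codeAt_add_one (hm : 2 ≤ m) (hS : IsEffDomSet (cycleGraph m □ pathGraph n) S)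
    (ha : CodeAt S a j) (hb : b = a + 1) : ¬CodeAt S b j := by
  rintro ⟨hj, hbS⟩
  subst hb
  exact Fin.self_ne_add_one hm a (congrArg Prod.fst (hS.eq_of_mem_closedNbr (v := (a, ⟨j, hj⟩))
    ha.2 hbS (Set.mem_insert _ _) ((mem_closedNbr_iff hm).2 (.inl ⟨rfl, .inr (.inl rfl)⟩))))

theorem not_codeAt_add_two (hm : 3 ≤ m) (hS : IsEffDomSet (cycleGraph m □ pathGraph n) S)
    (ha : CodeAt S a j) (hb : b = a + 2) : ¬CodeAt S b j := by
  rintro ⟨hj, hbS⟩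
  subst hb
  refine Fin.self_ne_add_two hm a (congrArg Prod.fst
    (hS.eq_of_mem_closedNbr (v := (a + 1, ⟨j, hj⟩)) ha.2 hbS ?_ ?_))
  · exact (mem_closedNbr_iff (by omega)).2 (.inl ⟨rfl, .inr (.inr (by ring))⟩)
  · exact (mem_closedNbr_iff (by omega)).2 (.inl ⟨rfl, .inr (.inl (by ring))⟩)

theorem not_codeAt_row_add_one (hm : 2 ≤ m) (hS : IsEffDomSet (cycleGraph m □ pathGraph n) S)
    (ha : CodeAt S a j) : ¬CodeAt S a (j + 1) := by
  rintro ⟨hj, hbS⟩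
  have := congrArg (Fin.val ∘ Prod.snd) (hS.eq_of_mem_closedNbr ha.2 hbS (Set.mem_insert _ _)
    ((mem_closedNbr_iff hm).2 (.inr ⟨rfl, .inl rfl⟩)))
  simp at this

theorem not_codeAt_row_add_two (hm : 2 ≤ m) (hS : IsEffDomSet (cycleGraph m □ pathGraph n) S)
    (ha : CodeAt S a j) : ¬CodeAt S a (j + 2) := by
  rintro ⟨hj, hbS⟩
  have := congrArg (Fin.val ∘ Prod.snd) (hS.eq_of_mem_closedNbr (v := (a, ⟨j + 1, by omega⟩))
    ha.2 hbS ((mem_closedNbr_iff hm).2 (.inr ⟨rfl, .inr rfl⟩))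
    ((mem_closedNbr_iff hm).2 (.inr ⟨rfl, .inl rfl⟩)))
  simp at this

theorem not_codeAt_diag (hm : 2 ≤ m) (hS : IsEffDomSet (cycleGraph m □ pathGraph n) S)
    (ha : CodeAt S a j) (hb : b = a + 1) : ¬CodeAt S b (j + 1) := by
  rintro ⟨hj, hbS⟩
  subst hb
  have := congrArg (Fin.val ∘ Prod.snd) (hS.eq_of_mem_closedNbr (v := (a + 1, ⟨j, by omega⟩))
    ha.2 hbS ((mem_closedNbr_iff hm).2 (.inl ⟨rfl, .inr (.inr (by ring))⟩))
    ((mem_closedNbr_iff hm).2 (.inr ⟨rfl, .inl rfl⟩)))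
  simp at this

theorem not_codeAt_antidiag (hm : 2 ≤ m) (hS : IsEffDomSet (cycleGraph m □ pathGraph n) S)
    (ha : CodeAt S a (j + 1)) (hb : b = a + 1) : ¬CodeAt S b j := by
  rintro ⟨hj, hbS⟩
  subst hb
  have := congrArg (Fin.val ∘ Prod.snd) (hS.eq_of_mem_closedNbr (v := (a + 1, ⟨j + 1, ha.1⟩))
    ha.2 hbS ((mem_closedNbr_iff hm).2 (.inl ⟨rfl, .inr (.inr (by ring))⟩))
    ((mem_closedNbr_iff hm).2 (.inr ⟨rfl, .inr rfl⟩)))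
  simp at this

end Packing

section RowZero

variable {i : Fin m}

theorem exists_codeAt_zero (hm : 2 ≤ m) (hS : IsEffDomSet (cycleGraph m □ pathGraph n) S)
    (hn : 0 < n) : ∃ i, CodeAt S i 0 := by
  rcases codeAt_cover hm hS 0 hn with h | h | h | h01 | h
  all_goals try exact ⟨_, h⟩
  rcases codeAt_cover hm hS 1 hn with h | h | h | h11 | h
  all_goals try exact ⟨_, h⟩
  exact (not_codeAt_add_one hm hS h01 (zero_add 1).symm h11).elim

theorem codeAt_add_three_or_codeAt_add_two_one (hm : 3 ≤ m)
    (hS : IsEffDomSet (cycleGraph m □ pathGraph n) S) (hi : CodeAt S i 0) :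
    CodeAt S (i + 3) 0 ∨ CodeAt S (i + 2) 1 := by
  rcases codeAt_cover (by omega) hS (i + 2) hi.lt with h | h | h | h | h
  · exact (not_codeAt_add_two hm hS hi rfl h).elim
  · rw [show i + 2 + 1 = i + 3 by ring] at h
    exact .inl h
  · exact (not_codeAt_add_one (by omega) hS hi (by ring) h).elim
  · exact .inr h
  · exact (not_codeAt_add_two hm hS hi rfl h).elim

theorem codeAt_add_three (hm : 3 ≤ m) (hS : IsEffDomSet (cycleGraph m □ pathGraph n) S)
    (hn : n ≤ 1) (hi : CodeAt S i 0) : CodeAt S (i + 3) 0 :=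
  (codeAt_add_three_or_codeAt_add_two_one hm hS hi).resolve_right fun h => by
    have := h.lt
    omega

theorem not_codeAt_add_three (hm : 3 ≤ m) (hS : IsEffDomSet (cycleGraph m □ pathGraph n) S)
    (hn : 1 < n) (hi : CodeAt S i 0) : ¬CodeAt S (i + 3) 0 := by
  have hm2 : 2 ≤ m := by omega
  intro h3
  have h1 : CodeAt S (i + 1) 2 := by
    rcases codeAt_cover hm2 hS (i + 1) hn with h | h | h | h | h
    · exact (not_codeAt_diag hm2 hS hi rfl h).elim
    · exact (not_codeAt_antidiag hm2 hS h (by ring) h3).elim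
    · rw [add_sub_cancel_right] at h
      exact (not_codeAt_row_add_one hm2 hS hi h).elim
    · exact h
    · exact (not_codeAt_add_one hm2 hS hi rfl h).elim
  have h2 : CodeAt S (i + 2) 2 := by
    rcases codeAt_cover hm2 hS (i + 2) hn with h | h | h | h | h
    · exact (not_codeAt_antidiag hm2 hS h (by ring) h3).elim
    · rw [show i + 2 + 1 = i + 3 by ring] at h
      exact (not_codeAt_row_add_one hm2 hS h3 h).elim
    · exact (not_codeAt_diag hm2 hS hi (by ring) h).elim
    · exact h
    · exact (not_codeAt_add_two hm hS hi rfl h).elim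
  exact not_codeAt_add_one hm2 hS h1 (by ring) h2

theorem codeAt_add_two_one (hm : 3 ≤ m) (hS : IsEffDomSet (cycleGraph m □ pathGraph n) S)
    (hn : 1 < n) (hi : CodeAt S i 0) : CodeAt S (i + 2) 1 :=
  (codeAt_add_three_or_codeAt_add_two_one hm hS hi).resolve_left
    (not_codeAt_add_three hm hS hn hi)

theorem codeAt_add_four (hm : 3 ≤ m) (hS : IsEffDomSet (cycleGraph m □ pathGraph n) S)
    (hi : CodeAt S i 0) (h21 : CodeAt S (i + 2) 1) : CodeAt S (i + 4) 0 := by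
  have hm2 : 2 ≤ m := by omega
  rcases codeAt_cover hm2 hS (i + 3) hi.lt with h | h | h | h | h
  · exact (not_codeAt_antidiag hm2 hS h21 (by ring) h).elim
  · rwa [show i + 3 + 1 = i + 4 by ring] at h
  · exact (not_codeAt_add_two hm hS hi (by ring) h).elim
  · exact (not_codeAt_add_one hm2 hS h21 (by ring) h).elim
  · exact (not_codeAt_antidiag hm2 hS h21 (by ring) h).elim

end RowZero

theorem not_isEffDomSet_of_two_lt (hm : 3 ≤ m) (hn : 2 < n) :
    ¬IsEffDomSet (cycleGraph m □ pathGraph n) S := by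
  intro hS
  have hm2 : 2 ≤ m := by omega
  obtain ⟨i, hi⟩ := exists_codeAt_zero hm2 hS (by omega)
  have h21 := codeAt_add_two_one hm hS (by omega) hi
  have h40 := codeAt_add_four hm hS hi h21
  have h61 := codeAt_add_two_one hm hS (by omega) h40
  have h33 : CodeAt S (i + 3) 3 := by
    rcases codeAt_cover hm2 hS (i + 3) hn with h | h | h | h | h
    · exact (not_codeAt_diag hm2 hS h21 (by ring) h).elim
    · rw [show i + 3 + 1 = i + 4 by ring] at h
      exact (not_codeAt_row_add_two hm2 hS h40 h).elim
    · rw [show i + 3 - 1 = i + 2 by ring] at h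
      exact (not_codeAt_row_add_one hm2 hS h21 h).elim
    · exact h
    · exact (not_codeAt_add_one hm2 hS h21 (by ring) h).elim
  have h43 : CodeAt S (i + 4) 3 := by
    rcases codeAt_cover hm2 hS (i + 4) hn with h | h | h | h | h
    · exact (not_codeAt_row_add_two hm2 hS h40 h).elim
    · exact (not_codeAt_antidiag hm2 hS h (by ring) h61).elim
    · exact (not_codeAt_diag hm2 hS h21 (by ring) h).elim
    · exact h
    · exact (not_codeAt_row_add_one hm2 hS h40 h).elim
  exact not_codeAt_add_one hm2 hS h33 (by ring) h43

theorem dvd_of_codeAt_periodic (hm : 3 ≤ m) (hS : IsEffDomSet (cycleGraph m □ pathGraph n) S)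
    {d : ℕ} (hd : 0 < d) (hd4 : d ≤ 4) (hP : ∀ i, CodeAt S i 0 → CodeAt S (i + d) 0)
    {i : Fin m} (hi : CodeAt S i 0) : d ∣ m := by
  have hg := Fin.apply_add_gcd hP hi
  obtain ⟨c, hc⟩ := Nat.gcd_dvd_left d m
  by_contra hdm
  -- a proper divisor of `d ≤ 4` is `1` or `2`
  have hc2 : 2 ≤ c := by
    rcases c with _ | _ | c
    · omega
    · exact (hdm (Nat.gcd_eq_left_iff_dvd.1 (by omega))).elim
    · omega
  have hg0 : 0 < d.gcd m := Nat.gcd_pos_of_pos_left m hd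
  obtain h1 | h2 : d.gcd m = 1 ∨ d.gcd m = 2 := by
    have : d.gcd m * 2 ≤ d.gcd m * c := Nat.mul_le_mul_left _ hc2
    omega
  · rw [h1, Nat.cast_one] at hg
    exact not_codeAt_add_one (by omega) hS hi rfl hg
  · rw [h2, Nat.cast_ofNat] at hg
    exact not_codeAt_add_two hm hS hi rfl hg

theorem isEffDomSet_pathGraph_one (hm : 3 ≤ m) (h3 : 3 ∣ m) :
    IsEffDomSet (cycleGraph m □ pathGraph 1) {p | p.1.val % 3 = 0} := by
  have hm2 : 2 ≤ m := by omega
  rintro ⟨i, j⟩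
  have hsucc := Fin.val_add_one_mod_of_dvd hm2 h3 i
  have hpred := Fin.val_add_one_mod_of_dvd hm2 h3 (i - 1)
  rw [sub_add_cancel] at hpred
  have hcov : ∀ a b, (i, j) ∈ closedNbr (cycleGraph m □ pathGraph 1) (a, b) ↔
      b = j ∧ (a = i ∨ a = i + 1 ∨ a = i - 1) := by
    intro a b
    simp [mem_closedNbr_iff hm2, Subsingleton.elim b j]
  refine existsUnique_of_exists_of_unique ?_ ?_
  · obtain h | h | h : i.val % 3 = 0 ∨ (i.val + 1) % 3 = 0 ∨ (i.val + 2) % 3 = 0 := by omega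
    · exact ⟨(i, j), h, (hcov _ _).2 ⟨rfl, .inl rfl⟩⟩
    · exact ⟨(i + 1, j), hsucc.trans h, (hcov _ _).2 ⟨rfl, .inr (.inl rfl)⟩⟩
    · exact ⟨(i - 1, j), show (i - 1).val % 3 = 0 by omega,
        (hcov _ _).2 ⟨rfl, .inr (.inr rfl)⟩⟩
  · rintro ⟨a, b⟩ ⟨a', b'⟩ ⟨ha, hv⟩ ⟨ha', hv'⟩
    obtain ⟨rfl, hA⟩ := (hcov _ _).1 hv
    obtain ⟨rfl, hA'⟩ := (hcov _ _).1 hv'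
    simp only [Set.mem_ofPred_eq] at ha ha'
    rcases hA with rfl | rfl | rfl <;> rcases hA' with rfl | rfl | rfl <;> first | rfl | omega

theorem isEffDomSet_pathGraph_two (hm : 3 ≤ m) (h4 : 4 ∣ m) :
    IsEffDomSet (cycleGraph m □ pathGraph 2) {p | p.1.val % 4 = 2 * p.2.val} := by
  have hm2 : 2 ≤ m := by omega
  rintro ⟨i, j⟩
  have hj := j.isLt
  have hsucc := Fin.val_add_one_mod_of_dvd hm2 h4 i
  have hpred := Fin.val_add_one_mod_of_dvd hm2 h4 (i - 1)
  rw [sub_add_cancel] at hpred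
  refine existsUnique_of_exists_of_unique ?_ ?_
  · obtain h | h | h | h : i.val % 4 = 2 * j.val ∨ (i.val + 1) % 4 = 2 * j.val ∨
        (i.val + 3) % 4 = 2 * j.val ∨ i.val % 4 = 2 * (1 - j.val) := by omega
    · exact ⟨(i, j), h, (mem_closedNbr_iff hm2).2 (.inl ⟨rfl, .inl rfl⟩)⟩
    · exact ⟨(i + 1, j), hsucc.trans h,
        (mem_closedNbr_iff hm2).2 (.inl ⟨rfl, .inr (.inl rfl)⟩)⟩
    · exact ⟨(i - 1, j), show (i - 1).val % 4 = 2 * j.val by omega,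
        (mem_closedNbr_iff hm2).2 (.inl ⟨rfl, .inr (.inr rfl)⟩)⟩
    · exact ⟨(i, ⟨1 - j.val, by omega⟩), h,
        (mem_closedNbr_iff hm2).2
          (.inr ⟨rfl, show 1 - j.val = j.val + 1 ∨ 1 - j.val + 1 = j.val by omega⟩)⟩
  · rintro ⟨a, b⟩ ⟨a', b'⟩ ⟨ha, hv⟩ ⟨ha', hv'⟩
    simp only [Set.mem_ofPred_eq] at ha ha'
    have := b.isLt
    have := b'.isLt
    rcases (mem_closedNbr_iff hm2).1 hv with ⟨rfl, rfl | rfl | rfl⟩ | ⟨rfl, hb⟩ <;>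
    rcases (mem_closedNbr_iff hm2).1 hv' with ⟨rfl, rfl | rfl | rfl⟩ | ⟨rfl, hb'⟩ <;>
    first | rfl | omega | exact congrArg _ (Fin.ext (by omega))

end Cylinder

theorem stmt5 (m n : ℕ) (hm : 3 ≤ m) (hn : 1 ≤ n) :
    (∃ S : Set (Fin m × Fin n), IsEffDomSet ((cycleGraph m).boxProd (pathGraph n)) S) ↔
      (n = 1 ∧ m % 3 = 0) ∨ (n = 2 ∧ m % 4 = 0) := by
  have : NeZero m := ⟨by omega⟩
  constructor
  · rintro ⟨S, hS⟩
    obtain ⟨i, hi⟩ := Cylinder.exists_codeAt_zero (by omega) hS hn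
    rcases (show n = 1 ∨ n = 2 ∨ 2 < n by omega) with rfl | rfl | hn
    · refine .inl ⟨rfl, Nat.mod_eq_zero_of_dvd ?_⟩
      exact Cylinder.dvd_of_codeAt_periodic hm hS (by norm_num) (by norm_num)
        (fun _ h => Cylinder.codeAt_add_three hm hS le_rfl h) hi
    · refine .inr ⟨rfl, Nat.mod_eq_zero_of_dvd ?_⟩
      exact Cylinder.dvd_of_codeAt_periodic hm hS (by norm_num) le_rfl
        (fun _ h => Cylinder.codeAt_add_four hm hS h
          (Cylinder.codeAt_add_two_one hm hS one_lt_two h)) hi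
    · exact absurd hS (Cylinder.not_isEffDomSet_of_two_lt hm hn)
  · rintro (⟨rfl, h3⟩ | ⟨rfl, h4⟩)
    · exact ⟨_, Cylinder.isEffDomSet_pathGraph_one hm (Nat.dvd_of_mod_eq_zero h3)⟩
    · exact ⟨_, Cylinder.isEffDomSet_pathGraph_two hm (Nat.dvd_of_mod_eq_zero h4)⟩
end

section
/- For every integer t ≥ 1 and k ≥ 1, γ_{[k]R}(C_{4t} □ P_2) = 2(k+1)t. -/
open SimpleGraph Finset
open scoped Classical

lemma cyc_adj {n : ℕ} [NeZero n] (hn : 2 ≤ n) (u v : Fin n) :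
    (cycleGraph n).Adj u v ↔ v = u - 1 ∨ v = u + 1 := by
  rw [cycleGraph_adj']
  have h1 : ((1 : Fin n)).val = 1 := by
    rw [Fin.val_one']; exact Nat.mod_eq_of_lt hn
  have e : ∀ w : Fin n, w.val = 1 ↔ w = 1 := fun w => by
    rw [Fin.ext_iff, h1]
  rw [e, e, sub_eq_iff_eq_add', sub_eq_iff_eq_add']
  constructor
  · rintro (h | h)
    · left; simp [h]
    · right; exact h
  · rintro (h | h)
    · left; simp [h]
    · right; exact h

lemma path_adj (u v : Fin 2) : (pathGraph 2).Adj u v ↔ v = u + 1 := by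
  rw [pathGraph_adj]; revert u v; decide

lemma nbr_filter {n : ℕ} [NeZero n] (hn : 3 ≤ n) (v : Fin n × Fin 2) :
    univ.filter (fun u => ((cycleGraph n).boxProd (pathGraph 2)).Adj v u)
      = {(v.1 - 1, v.2), (v.1 + 1, v.2), (v.1, v.2 + 1)} := by
  ext u
  simp only [mem_filter, mem_univ, true_and, boxProd_adj, cyc_adj (by omega : 2 ≤ n),
    path_adj, mem_insert, mem_singleton, Prod.ext_iff]
  constructor
  · rintro (⟨h1 | h1, h2⟩ | ⟨h1, h2⟩)
    · exact Or.inl ⟨h1, h2.symm⟩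
    · exact Or.inr (Or.inl ⟨h1, h2.symm⟩)
    · exact Or.inr (Or.inr ⟨h2.symm, h1⟩)
  · rintro (⟨h1, h2⟩ | ⟨h1, h2⟩ | ⟨h1, h2⟩)
    · exact Or.inl ⟨Or.inl h1, h2.symm⟩
    · exact Or.inl ⟨Or.inr h1, h2.symm⟩
    · exact Or.inr ⟨h2, h1.symm⟩

lemma finTwoNeZero {n : ℕ} [NeZero n] (hn : 3 ≤ n) : (1 : Fin n) + 1 ≠ 0 := by
  intro h
  have : ((1 : Fin n) + 1).val = 0 := by rw [h]; rfl
  rw [Fin.val_add] at this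
  have h1 : ((1 : Fin n)).val = 1 := by
    rw [Fin.val_one']; exact Nat.mod_eq_of_lt (by omega)
  rw [h1] at this
  rw [Nat.mod_eq_of_lt (by omega)] at this
  omega

lemma nbr_sum {n : ℕ} [NeZero n] (hn : 3 ≤ n) (f : Fin n × Fin 2 → ℕ) (v : Fin n × Fin 2) :
    ∑ u ∈ univ.filter (fun u => ((cycleGraph n).boxProd (pathGraph 2)).Adj v u), f u
      = f (v.1 - 1, v.2) + f (v.1 + 1, v.2) + f (v.1, v.2 + 1) := by
  rw [nbr_filter hn]
  have d0 : v.1 - 1 ≠ v.1 + 1 := by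
    intro h
    rw [sub_eq_iff_eq_add] at h
    rw [add_assoc] at h
    exact finTwoNeZero hn (left_eq_add.mp h)
  have dj : ∀ j : Fin 2, j ≠ j + 1 := by decide
  have d1 : ((v.1 - 1, v.2) : Fin n × Fin 2) ≠ (v.1, v.2 + 1) := by
    intro h; exact dj v.2 (congrArg Prod.snd h)
  have d2 : ((v.1 + 1, v.2) : Fin n × Fin 2) ≠ (v.1, v.2 + 1) := by
    intro h; exact dj v.2 (congrArg Prod.snd h)
  rw [Finset.sum_insert (by simp [d0, d1]), Finset.sum_insert (by simp [d2]),
    Finset.sum_singleton, add_assoc]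

lemma key {V : Type*} [Fintype V] {G : SimpleGraph V} {k : ℕ} {f : V → ℕ}
    (hf : IsKRDF G k f) {v : V} (hv : f v < k) :
    k + 1 ≤ f v + ∑ u ∈ univ.filter (fun u => G.Adj v u), f u := by
  have h := hf.2 v hv
  by_cases h0 : ∀ u ∈ univ.filter (fun u => G.Adj v u), f u = 0
  · have hs : ∑ u ∈ univ.filter (fun u => G.Adj v u), f u = 0 := Finset.sum_eq_zero h0
    rw [hs] at h
    omega
  · push_neg at h0
    obtain ⟨u, hu, hu0⟩ := h0
    have : u ∈ univ.filter (fun u => G.Adj v u ∧ 0 < f u) := by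
      simp only [mem_filter, mem_univ, true_and] at hu ⊢
      exact ⟨hu, Nat.pos_of_ne_zero hu0⟩
    have hc : 1 ≤ (univ.filter (fun u => G.Adj v u ∧ 0 < f u)).card :=
      Finset.card_pos.mpr ⟨u, this⟩
    omega

section Column
variable {n k : ℕ} [NeZero n] {f : Fin n × Fin 2 → ℕ}


lemma adj_cross (i : Fin n) (j : Fin 2) : (cycleGraph n □ pathGraph 2).Adj (i, j) (i, j + 1) :=
  SimpleGraph.boxProd_adj_right.mpr ((path_adj j (j+1)).mpr rfl)

lemma adj_left (hn : 3 ≤ n) (i : Fin n) (j : Fin 2) : (cycleGraph n □ pathGraph 2).Adj (i, j) (i - 1, j) :=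
  SimpleGraph.boxProd_adj_left.mpr ((cyc_adj (by omega) i (i-1)).mpr (Or.inl rfl))

lemma adj_right (hn : 3 ≤ n) (i : Fin n) (j : Fin 2) : (cycleGraph n □ pathGraph 2).Adj (i, j) (i + 1, j) :=
  SimpleGraph.boxProd_adj_left.mpr ((cyc_adj (by omega) i (i+1)).mpr (Or.inr rfl))

lemma column (hn : 3 ≤ n) (hk : 1 ≤ k) (hf : IsKRDF (cycleGraph n □ pathGraph 2) k f) (i : Fin n) :
    2 * k + 2 ≤ (f (i - 1, 0) + f (i - 1, 1)) + 2 * (f (i, 0) + f (i, 1))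
      + (f (i + 1, 0) + f (i + 1, 1)) := by
  have e01 : (0 : Fin 2) + 1 = 1 := rfl
  have e10 : (1 : Fin 2) + 1 = 0 := rfl
  have hs0 := nbr_sum hn f (i, 0)
  have hs1 := nbr_sum hn f (i, 1)
  simp only [e01, e10] at hs0 hs1
  rcases lt_or_ge (f (i, 0)) k with ha | ha <;> rcases lt_or_ge (f (i, 1)) k with hb | hb
  · -- both < k
    have K0 := key hf ha; have K1 := key hf hb
    rw [hs0] at K0; rw [hs1] at K1
    omega
  · -- f(i,0) < k ≤ f(i,1)
    have C0 := hf.2 (i, 0) ha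
    rw [hs0] at C0
    set A0 := univ.filter (fun u => (cycleGraph n □ pathGraph 2).Adj (i, (0:Fin 2)) u ∧ 0 < f u) with hA0
    have hmem1 : ((i, 1) : Fin n × Fin 2) ∈ A0 := by
      rw [hA0, mem_filter]
      exact ⟨mem_univ _, by simpa using adj_cross i 0, by omega⟩
    have hc1 : 1 ≤ A0.card := Finset.card_pos.mpr ⟨_, hmem1⟩
    rcases lt_or_ge k (f (i, 1)) with hb1 | hb1
    · omega
    · -- f(i,1) = k
      rcases Nat.eq_zero_or_pos (f (i, 0)) with ha0 | ha0
      · rcases Nat.eq_zero_or_pos (f (i - 1, 0)) with hl | hl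
        · rcases Nat.eq_zero_or_pos (f (i + 1, 0)) with hr | hr
          · omega
          · have hmem2 : ((i + 1, 0) : Fin n × Fin 2) ∈ A0 := by
              rw [hA0, mem_filter]
              exact ⟨mem_univ _, adj_right hn i 0, hr⟩
            have hc2 : 2 ≤ A0.card := Finset.one_lt_card.mpr
              ⟨_, hmem1, _, hmem2, by intro h; simpa using congrArg Prod.snd h⟩
            omega
        · have hmem2 : ((i - 1, 0) : Fin n × Fin 2) ∈ A0 := by
            rw [hA0, mem_filter]
            exact ⟨mem_univ _, adj_left hn i 0, hl⟩
          have hc2 : 2 ≤ A0.card := Finset.one_lt_card.mpr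
            ⟨_, hmem1, _, hmem2, by intro h; simpa using congrArg Prod.snd h⟩
          omega
      · omega
  · -- f(i,1) < k ≤ f(i,0)
    have C1 := hf.2 (i, 1) hb
    rw [hs1] at C1
    set A1 := univ.filter (fun u => (cycleGraph n □ pathGraph 2).Adj (i, (1:Fin 2)) u ∧ 0 < f u) with hA1
    have hmem1 : ((i, 0) : Fin n × Fin 2) ∈ A1 := by
      rw [hA1, mem_filter]
      exact ⟨mem_univ _, by simpa [e10] using adj_cross i 1, by omega⟩
    have hc1 : 1 ≤ A1.card := Finset.card_pos.mpr ⟨_, hmem1⟩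
    rcases lt_or_ge k (f (i, 0)) with ha1 | ha1
    · omega
    · rcases Nat.eq_zero_or_pos (f (i, 1)) with hb0 | hb0
      · rcases Nat.eq_zero_or_pos (f (i - 1, 1)) with hl | hl
        · rcases Nat.eq_zero_or_pos (f (i + 1, 1)) with hr | hr
          · omega
          · have hmem2 : ((i + 1, 1) : Fin n × Fin 2) ∈ A1 := by
              rw [hA1, mem_filter]
              exact ⟨mem_univ _, adj_right hn i 1, hr⟩
            have hc2 : 2 ≤ A1.card := Finset.one_lt_card.mpr
              ⟨_, hmem1, _, hmem2, by intro h; simpa using congrArg Prod.snd h⟩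
            omega
        · have hmem2 : ((i - 1, 1) : Fin n × Fin 2) ∈ A1 := by
            rw [hA1, mem_filter]
            exact ⟨mem_univ _, adj_left hn i 1, hl⟩
          have hc2 : 2 ≤ A1.card := Finset.one_lt_card.mpr
            ⟨_, hmem1, _, hmem2, by intro h; simpa using congrArg Prod.snd h⟩
          omega
      · omega
  · omega

end Column

section Upper
variable {n k : ℕ} [NeZero n]

lemma val_one' (hn : 2 ≤ n) : ((1 : Fin n)).val = 1 := by
  rw [Fin.val_one']; exact Nat.mod_eq_of_lt hn

lemma mod4_add (hn : 4 ≤ n) (hd : 4 ∣ n) (i : Fin n) :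
    ((i + 1 : Fin n)).val % 4 = (i.val + 1) % 4 := by
  rw [Fin.val_add, val_one' (by omega), Nat.mod_mod_of_dvd _ hd]

lemma mod4_sub (hn : 4 ≤ n) (hd : 4 ∣ n) (i : Fin n) :
    ((i - 1 : Fin n)).val % 4 = (i.val + 3) % 4 := by
  have : (i - 1 : Fin n).val = (n - (1:Fin n).val + i.val) % n := by rw [Fin.sub_def]
  rw [this, val_one' (by omega), Nat.mod_mod_of_dvd _ hd]
  omega

/-- The canonical optimal function. -/
def f0 (n k : ℕ) : Fin n × Fin 2 → ℕ := fun v =>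
  if (v.1.val % 4 = 0 ∧ v.2 = 0) ∨ (v.1.val % 4 = 2 ∧ v.2 = 1) then k + 1 else 0

lemma f0_krdf (hn : 4 ≤ n) (hd : 4 ∣ n) (hk : 1 ≤ k) :
    IsKRDF (cycleGraph n □ pathGraph 2) k (f0 n k) := by
  constructor
  · intro v; unfold f0; split_ifs <;> omega
  · intro v hv
    by_cases hc : (v.1.val % 4 = 0 ∧ v.2 = 0) ∨ (v.1.val % 4 = 2 ∧ v.2 = 1)
    · exfalso; have : f0 n k v = k + 1 := if_pos hc; omega
    · -- find an active neighbour w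
      obtain ⟨i, j⟩ := v
      have hw : ∃ w, (cycleGraph n □ pathGraph 2).Adj (i, j) w ∧ f0 n k w = k + 1 := by
        fin_cases j
        · simp only [] at hc
          push_neg at hc
          have hc0 : i.val % 4 ≠ 0 := by
            intro h; exact absurd rfl (hc.1 h)
          have h3 : i.val % 4 = 1 ∨ i.val % 4 = 2 ∨ i.val % 4 = 3 := by omega
          rcases h3 with h | h | h
          · exact ⟨(i - 1, 0), adj_left (by omega) i 0, if_pos (Or.inl ⟨by rw [mod4_sub hn hd]; omega, rfl⟩)⟩
          · exact ⟨(i, 1), by simpa using adj_cross i 0, if_pos (Or.inr ⟨h, rfl⟩)⟩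
          · exact ⟨(i + 1, 0), adj_right (by omega) i 0, if_pos (Or.inl ⟨by rw [mod4_add hn hd]; omega, rfl⟩)⟩
        · simp only [] at hc
          push_neg at hc
          have hc2 : i.val % 4 ≠ 2 := by
            intro h; exact absurd rfl (hc.2 h)
          have h3 : i.val % 4 = 0 ∨ i.val % 4 = 1 ∨ i.val % 4 = 3 := by omega
          rcases h3 with h | h | h
          · exact ⟨(i, 0), by simpa using adj_cross i 1, if_pos (Or.inl ⟨h, rfl⟩)⟩
          · exact ⟨(i + 1, 1), adj_right (by omega) i 1, if_pos (Or.inr ⟨by rw [mod4_add hn hd]; omega, rfl⟩)⟩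
          · exact ⟨(i - 1, 1), adj_left (by omega) i 1, if_pos (Or.inr ⟨by rw [mod4_sub hn hd]; omega, rfl⟩)⟩
      obtain ⟨w, hadj, hwv⟩ := hw
      set A := univ.filter (fun u => (cycleGraph n □ pathGraph 2).Adj (i, j) u ∧ 0 < f0 n k u) with hA
      have hwA : w ∈ A := by
        rw [hA, mem_filter]; exact ⟨mem_univ _, hadj, by omega⟩
      have hcard : 1 ≤ A.card := Finset.card_pos.mpr ⟨_, hwA⟩
      have hsub : A ⊆ univ.filter (fun u => (cycleGraph n □ pathGraph 2).Adj (i, j) u) := by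
        intro u hu; rw [hA, mem_filter] at hu; rw [mem_filter]; exact ⟨hu.1, hu.2.1⟩
      have hsumA : ∑ u ∈ A, f0 n k u = A.card * (k + 1) := by
        rw [Finset.sum_congr rfl (fun u hu => ?_), Finset.sum_const, smul_eq_mul]
        · rw [hA, mem_filter] at hu
          have := hu.2.2
          unfold f0 at this ⊢
          split_ifs at this ⊢ with h
          · rfl
          · omega
      have hle : ∑ u ∈ A, f0 n k u ≤
          ∑ u ∈ univ.filter (fun u => (cycleGraph n □ pathGraph 2).Adj (i, j) u), f0 n k u :=
        Finset.sum_le_sum_of_subset hsub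
      have hkey : k + A.card ≤ A.card * (k + 1) := by
        have h1 : k * 1 ≤ k * A.card := Nat.mul_le_mul_left k hcard
        nlinarith
      omega

end Upper

lemma range4 (g : ℕ → ℕ) (t : ℕ) :
    ∑ x ∈ Finset.range (4*t), g (x % 4) = t * (g 0 + g 1 + g 2 + g 3) := by
  induction t with
  | zero => simp
  | succ t ih =>
    have h4 : 4*(t+1) = (4*t) + 1 + 1 + 1 + 1 := by ring
    rw [h4, Finset.sum_range_succ, Finset.sum_range_succ, Finset.sum_range_succ,
      Finset.sum_range_succ, ih]
    have e0 : (4*t) % 4 = 0 := by omega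
    have e1 : (4*t+1) % 4 = 1 := by omega
    have e2 : (4*t+1+1) % 4 = 2 := by omega
    have e3 : (4*t+1+1+1) % 4 = 3 := by omega
    rw [e0, e1, e2, e3]; ring

lemma sum_f0 (t k : ℕ) : ∑ v : Fin (4*t) × Fin 2, f0 (4*t) k v = 2*(k+1)*t := by
  classical
  have hrow : ∀ i : Fin (4*t), (∑ j : Fin 2, f0 (4*t) k (i, j))
      = (if i.val % 4 = 0 then k+1 else 0) + (if i.val % 4 = 2 then k+1 else 0) := by
    intro i
    rw [Fin.sum_univ_two]
    unfold f0
    have h01 : ((0 : Fin 2) = 1) = False := by simp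
    have h10 : ((1 : Fin 2) = 0) = False := by simp
    simp only [h01, h10, and_false, or_false, false_or, and_true]
  have h1 : ∑ v : Fin (4*t) × Fin 2, f0 (4*t) k v
      = ∑ x ∈ Finset.range (4*t), ((if x % 4 = 0 then k+1 else 0) + (if x % 4 = 2 then k+1 else 0)) := by
    rw [Fintype.sum_prod_type, Finset.sum_congr rfl (fun i _ => hrow i)]
    exact Fin.sum_univ_eq_sum_range (fun x => (if x % 4 = 0 then k+1 else 0) + (if x % 4 = 2 then k+1 else 0)) (4*t)
  rw [h1]
  have h2 := range4 (fun r => (if r = 0 then k+1 else 0) + (if r = 2 then k+1 else 0)) t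
  refine h2.trans ?_
  norm_num
  ring

theorem stmt6 (t k : ℕ) (ht : 1 ≤ t) (hk : 1 ≤ k) :
    kRoman ((cycleGraph (4 * t)).boxProd (pathGraph 2)) k = 2 * (k + 1) * t := by
  haveI : NeZero (4 * t) := ⟨by omega⟩
  have hd : (4:ℕ) ∣ 4 * t := ⟨t, rfl⟩
  have hn4 : 4 ≤ 4 * t := by omega
  have hmem : 2 * (k + 1) * t ∈
      {w | ∃ f : Fin (4*t) × Fin 2 → ℕ,
        IsKRDF ((cycleGraph (4 * t)).boxProd (pathGraph 2)) k f ∧ ∑ v, f v = w} :=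
    ⟨f0 (4*t) k, f0_krdf hn4 hd hk, sum_f0 t k⟩
  refine le_antisymm (Nat.sInf_le hmem) (le_csInf ⟨_, hmem⟩ ?_)
  rintro w ⟨f, hf, rfl⟩
  have hcol := fun i : Fin (4*t) => column (by omega) hk hf i
  have hsum : (4*t) * (2*k+2) ≤
      ∑ i : Fin (4*t), ((f (i-1,0) + f (i-1,1)) + 2*(f (i,0)+f (i,1)) + (f (i+1,0)+f (i+1,1))) := by
    calc (4*t) * (2*k+2) = ∑ _i : Fin (4*t), (2*k+2) := by
          rw [Finset.sum_const, card_univ, Fintype.card_fin, smul_eq_mul]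
      _ ≤ _ := Finset.sum_le_sum (fun i _ => hcol i)
  set W : Fin (4*t) → ℕ := fun i => f (i, 0) + f (i, 1) with hW
  have hsplit : ∑ i : Fin (4*t), ((f (i-1,0) + f (i-1,1)) + 2*(f (i,0)+f (i,1)) + (f (i+1,0)+f (i+1,1)))
      = (∑ i : Fin (4*t), W (i-1)) + 2 * (∑ i : Fin (4*t), W i) + (∑ i : Fin (4*t), W (i+1)) := by
    rw [Finset.mul_sum, ← Finset.sum_add_distrib, ← Finset.sum_add_distrib]
  have hL : ∑ i : Fin (4*t), W (i-1) = ∑ i : Fin (4*t), W i :=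
    Fintype.sum_equiv (Equiv.subRight 1) _ _ (fun i => rfl)
  have hR : ∑ i : Fin (4*t), W (i+1) = ∑ i : Fin (4*t), W i :=
    Fintype.sum_equiv (Equiv.addRight 1) _ _ (fun i => rfl)
  have htot : ∑ v : Fin (4*t) × Fin 2, f v = ∑ i : Fin (4*t), W i := by
    rw [Fintype.sum_prod_type]
    exact Finset.sum_congr rfl (fun i _ => Fin.sum_univ_two _)
  rw [hsplit, hL, hR] at hsum
  rw [htot]
  set S := ∑ i : Fin (4*t), W i with hS
  have h4 : 4 * (2 * (k+1) * t) ≤ 4 * S := by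
    calc 4 * (2 * (k+1) * t) = (4*t) * (2*k+2) := by ring
      _ ≤ S + 2 * S + S := hsum
      _ = 4 * S := by ring
  omega
end

section
/- If H is a spanning subgraph of a graph G, then γ_{[k]R}(G) ≤ γ_{[k]R}(H) for every integer k ≥ 1. -/
open SimpleGraph Finset
open scoped Classical

/- In the defining inequality of a `[k]`-Roman dominating function each positive neighbour `u`
contributes `f u` on the left and `1` on the right, i.e. a net `f u - 1 ≥ 0`. Written this way the
condition only involves a sum of nonnegative terms over the neighbourhood, which can only grow when
edges are added. -/

theorem Finset.sum_eq_sum_tsub_one_add_card_filter_pos {α : Type*} (s : Finset α) (f : α → ℕ) :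
    ∑ u ∈ s, f u = ∑ u ∈ s, (f u - 1) + #(s.filter (0 < f ·)) := by
  rw [card_filter, ← sum_add_distrib]
  refine sum_congr rfl fun u _ => ?_
  split_ifs <;> omega

theorem isKRDF_iff_tsub_one {V : Type*} [Fintype V] (G : SimpleGraph V) (k : ℕ) (f : V → ℕ) :
    IsKRDF G k f ↔ (∀ v, f v ≤ k + 1) ∧
      ∀ v, f v < k → k ≤ f v + ∑ u ∈ univ.filter (fun u => G.Adj v u), (f u - 1) := by
  refine and_congr_right fun _ => forall_congr' fun v => imp_congr_right fun _ => ?_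
  rw [sum_eq_sum_tsub_one_add_card_filter_pos, filter_filter]
  omega

theorem IsKRDF.mono {V : Type*} [Fintype V] {G H : SimpleGraph V} (hHG : H ≤ G) {k : ℕ}
    {f : V → ℕ} (hf : IsKRDF H k f) : IsKRDF G k f := by
  rw [isKRDF_iff_tsub_one] at hf ⊢
  refine ⟨hf.1, fun v hv => (hf.2 v hv).trans ?_⟩
  gcongr
  exact fun huv => hHG huv

theorem isKRDF_const_succ {V : Type*} [Fintype V] (G : SimpleGraph V) (k : ℕ) :
    IsKRDF G k fun _ => k + 1 :=
  ⟨fun _ => le_rfl, fun _ hv => absurd hv (Nat.not_lt.mpr (Nat.le_succ k))⟩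

theorem stmt9_general {V : Type*} [Fintype V] (G H : SimpleGraph V) (hsub : H ≤ G)
    (k : ℕ) :
    kRoman G k ≤ kRoman H k := by
  obtain ⟨f, hf, hfw⟩ := Nat.sInf_mem (s := {w | ∃ f : V → ℕ, IsKRDF H k f ∧ ∑ v, f v = w})
    ⟨_, _, isKRDF_const_succ H k, rfl⟩
  exact Nat.sInf_le ⟨f, hf.mono hsub, hfw⟩

theorem stmt9 {V : Type*} [Fintype V] (G H : SimpleGraph V) (hsub : H ≤ G)
    (k : ℕ) (hk : 1 ≤ k) :
    kRoman G k ≤ kRoman H k :=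
  stmt9_general G H hsub k
end

section
/- For every integer n ≥ 4, the double Roman domination number of C_3 □ P_n satisfies γ_{[2]R}(C_3 □ P_n) ≤ 2n + 2. -/
open SimpleGraph Finset
open scoped Classical

/-- The weight function: 2 on row `j % 3` of column `j`, plus two extra 1s at the ends. -/
def Fdef (n : ℕ) : Fin 3 × Fin n → ℕ := fun p =>
  if (p.1 : ℕ) = (p.2 : ℕ) % 3 then 2
  else if ((p.2 : ℕ) = 0 ∧ (p.1 : ℕ) = 2) ∨ ((p.2 : ℕ) = n - 1 ∧ (p.1 : ℕ) = n % 3) then 1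
  else 0

lemma sumF (n : ℕ) (hn : 4 ≤ n) : ∑ v, Fdef n v = 2 * n + 2 := by
  rw [Fintype.sum_prod_type_right]
  have hcol : ∀ j : Fin n, (∑ r : Fin 3, Fdef n (r, j))
      = 2 + ((if (j : ℕ) = 0 then 1 else 0) + (if (j : ℕ) = n - 1 then 1 else 0)) := by
    intro j
    have hj : (j : ℕ) < n := j.isLt
    rw [Fin.sum_univ_three]
    simp only [Fdef, Fin.val_zero, Fin.val_one, Fin.val_two, and_true, true_and]
    split_ifs <;> omega
  calc ∑ j : Fin n, ∑ r : Fin 3, Fdef n (r, j)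
      = ∑ j : Fin n, (2 + ((if (j : ℕ) = 0 then 1 else 0)
          + (if (j : ℕ) = n - 1 then 1 else 0))) := by
        exact Finset.sum_congr rfl fun j _ => hcol j
    _ = ∑ i ∈ Finset.range n, (2 + ((if i = 0 then 1 else 0)
          + (if i = n - 1 then 1 else 0))) := by
        exact Fin.sum_univ_eq_sum_range (fun i => 2 + ((if i = 0 then 1 else 0) + (if i = n - 1 then 1 else 0))) n
    _ = 2 * n + 2 := by
        rw [Finset.sum_add_distrib, Finset.sum_add_distrib, Finset.sum_const,
          Finset.card_range, Finset.sum_ite_eq' (Finset.range n) 0 (fun _ => 1),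
          Finset.sum_ite_eq' (Finset.range n) (n - 1) (fun _ => 1)]
        have h0 : (0 : ℕ) ∈ Finset.range n := Finset.mem_range.mpr (by omega)
        have h1 : n - 1 ∈ Finset.range n := Finset.mem_range.mpr (by omega)
        rw [if_pos h0, if_pos h1]
        simp [mul_comm]

lemma mainF (n : ℕ) (hn : 4 ≤ n) :
    ∀ v : Fin 3 × Fin n, Fdef n v < 2 →
      2 ≤ Fdef n v + (univ.filter fun u =>
        ((cycleGraph 3).boxProd (pathGraph n)).Adj v u ∧ 2 ≤ Fdef n u).card := by
  set G := (cycleGraph 3).boxProd (pathGraph n) with hG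
  have adjC : ∀ (a b : Fin 3) (c : Fin n), (a : ℕ) ≠ (b : ℕ) → G.Adj (a, c) (b, c) := by
    intro a b c hab
    rw [hG, boxProd_adj]
    exact Or.inl ⟨by rw [cycleGraph_three_eq_top, top_adj]; exact Fin.ne_of_val_ne hab, rfl⟩
  have adjP : ∀ (a : Fin 3) (c d : Fin n),
      ((c : ℕ) + 1 = (d : ℕ) ∨ (d : ℕ) + 1 = (c : ℕ)) → G.Adj (a, c) (a, d) := by
    intro a c d h
    rw [hG, boxProd_adj]
    exact Or.inr ⟨pathGraph_adj.mpr h, rfl⟩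
  rintro ⟨r, j⟩ hv
  have hr3 : (r : ℕ) < 3 := r.isLt
  have hjn : (j : ℕ) < n := j.isLt
  by_cases h1 : (r : ℕ) = (j : ℕ) % 3
  · simp [Fdef, h1] at hv
  by_cases h2 : ((j : ℕ) = 0 ∧ (r : ℕ) = 2) ∨ ((j : ℕ) = n - 1 ∧ (r : ℕ) = n % 3)
  · -- value 1 vertices: one heavy neighbour suffices
    have hfv : Fdef n (r, j) = 1 := by simp [Fdef, h1, h2]
    have hcard : ∃ u, u ∈ (univ.filter fun u => G.Adj (r, j) u ∧ 2 ≤ Fdef n u) := by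
      rcases h2 with ⟨hj0, hr2⟩ | ⟨hjn1, hrn⟩
      · refine ⟨((⟨0, by omega⟩ : Fin 3), j), ?_⟩
        rw [Finset.mem_filter]
        refine ⟨Finset.mem_univ _, adjC _ _ _ (by simp only [Fin.val_mk]; omega), ?_⟩
        simp [Fdef, hj0]
      · refine ⟨((⟨(n - 1) % 3, by omega⟩ : Fin 3), j), ?_⟩
        rw [Finset.mem_filter]
        refine ⟨Finset.mem_univ _, adjC _ _ _ (by simp only [Fin.val_mk]; omega), ?_⟩
        simp [Fdef, hjn1]
    obtain ⟨u, hu⟩ := hcard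
    have := Finset.card_pos.mpr ⟨u, hu⟩
    omega
  · -- value 0 vertices: two heavy neighbours
    have hfv : Fdef n (r, j) = 0 := by simp [Fdef, h1, h2]
    set c1 : Fin 3 := ⟨(j : ℕ) % 3, by omega⟩ with hc1
    have hu1 : (c1, j) ∈ (univ.filter fun u => G.Adj (r, j) u ∧ 2 ≤ Fdef n u) := by
      rw [Finset.mem_filter]
      refine ⟨Finset.mem_univ _, adjC _ _ _ (by simp [hc1]; omega), ?_⟩
      simp [Fdef, hc1]
    have hrcase : (r : ℕ) = ((j : ℕ) + 1) % 3 ∨ (r : ℕ) = ((j : ℕ) + 2) % 3 := by omega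
    rcases hrcase with hr | hr
    · have hjlt : (j : ℕ) + 1 < n := by
        rcases Nat.lt_or_ge ((j : ℕ) + 1) n with h | h
        · exact h
        · exact absurd (Or.inr ⟨by omega, by omega⟩) h2
      set u2 : Fin 3 × Fin n := (r, ⟨(j : ℕ) + 1, hjlt⟩) with hu2def
      have hu2 : u2 ∈ (univ.filter fun u => G.Adj (r, j) u ∧ 2 ≤ Fdef n u) := by
        rw [Finset.mem_filter]
        refine ⟨Finset.mem_univ _, adjP _ _ _ (Or.inl rfl), ?_⟩
        simp [Fdef, hu2def, hr]
      have hne : ((c1, j) : Fin 3 × Fin n) ≠ u2 := by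
        intro h
        have : (j : ℕ) = (j : ℕ) + 1 := congrArg Fin.val (congrArg Prod.snd h)
        omega
      have := Finset.one_lt_card.mpr ⟨_, hu1, _, hu2, hne⟩
      omega
    · have hjpos : 0 < (j : ℕ) := by
        rcases Nat.eq_zero_or_pos (j : ℕ) with h | h
        · exact absurd (Or.inl ⟨h, by omega⟩) h2
        · exact h
      set u2 : Fin 3 × Fin n := (r, ⟨(j : ℕ) - 1, by omega⟩) with hu2def
      have hu2 : u2 ∈ (univ.filter fun u => G.Adj (r, j) u ∧ 2 ≤ Fdef n u) := by
        rw [Finset.mem_filter]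
        refine ⟨Finset.mem_univ _, adjP _ _ _ (Or.inr (by simp; omega)), ?_⟩
        have : (r : ℕ) = ((j : ℕ) - 1) % 3 := by omega
        simp [Fdef, hu2def, this]
      have hne : ((c1, j) : Fin 3 × Fin n) ≠ u2 := by
        intro h
        have : (j : ℕ) = (j : ℕ) - 1 := congrArg Fin.val (congrArg Prod.snd h)
        omega
      have := Finset.one_lt_card.mpr ⟨_, hu1, _, hu2, hne⟩
      omega


lemma helperKRDF {V : Type*} (G : SimpleGraph V) [Fintype V] (f : V → ℕ)
    (hle : ∀ v, f v ≤ 3)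
    (h : ∀ v, f v < 2 →
      2 ≤ f v + (univ.filter fun u => G.Adj v u ∧ 2 ≤ f u).card) :
    (∀ v, f v ≤ 2 + 1) ∧
    ∀ v : V, f v < 2 →
      f v + ∑ u ∈ univ.filter (fun u => G.Adj v u), f u ≥
        2 + (univ.filter (fun u => G.Adj v u ∧ 0 < f u)).card := by
  refine ⟨fun v => hle v, fun v hv => ?_⟩
  set A := univ.filter fun u => G.Adj v u with hA
  set P := univ.filter fun u => G.Adj v u ∧ 0 < f u with hP
  set H := univ.filter fun u => G.Adj v u ∧ 2 ≤ f u with hH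
  have hHP : H ⊆ P := by
    intro u hu
    simp only [hH, hP, mem_filter] at *
    exact ⟨hu.1, hu.2.1, by omega⟩
  have hPA : P ⊆ A := by
    intro u hu
    simp only [hA, hP, mem_filter] at *
    exact ⟨hu.1, hu.2.1⟩
  have c0 : ∑ u ∈ P, f u ≤ ∑ u ∈ A, f u :=
    Finset.sum_le_sum_of_subset hPA
  have c1 : ∑ u ∈ (P \ H), f u + ∑ u ∈ H, f u = ∑ u ∈ P, f u :=
    Finset.sum_sdiff hHP
  have c2 : H.card • 2 ≤ ∑ u ∈ H, f u := by
    apply Finset.card_nsmul_le_sum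
    intro u hu
    simp only [hH, mem_filter] at hu
    exact hu.2.2
  have c3 : (P \ H).card • 1 ≤ ∑ u ∈ (P \ H), f u := by
    apply Finset.card_nsmul_le_sum
    intro u hu
    have := (Finset.mem_sdiff.mp hu).1
    simp only [hP, mem_filter] at this
    omega
  have c4 : (P \ H).card = P.card - H.card := Finset.card_sdiff_of_subset hHP
  have c5 : H.card ≤ P.card := Finset.card_le_card hHP
  have c6 := h v hv
  rw [← hH] at c6
  simp only [smul_eq_mul] at c2 c3
  omega


theorem stmt12 (n : ℕ) (hn : 4 ≤ n) :
    kRoman ((cycleGraph 3).boxProd (pathGraph n)) 2 ≤ 2 * n + 2 := by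
  have hK : kRoman ((cycleGraph 3).boxProd (pathGraph n)) 2 ≤ 2 * n + 2 := by
    apply Nat.sInf_le
    refine ⟨Fdef n, ?_, sumF n hn⟩
    exact helperKRDF _ _ (fun v => by unfold Fdef; split_ifs <;> omega) (mainF n hn)
  exact hK
end

section
/- For every k ≥ 1 and n ≥ 4, γ_{[k]R}(C_3 □ P_n) ≤ 3(n−2)·⌈(k+4)/5⌉ + 6·⌈(k+3−⌈(k+4)/5⌉)/3⌉, and this quantity is at most (3nk + 27n + 2k − 2)/5. -/
open SimpleGraph Finset
open scoped Classical

private lemma nbrFilter {n : ℕ} (a : Fin 3) (j : Fin n) (T : Finset (Fin n))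
    (hT : ∀ x, (pathGraph n).Adj j x ↔ x ∈ T) :
    univ.filter (fun u => ((cycleGraph 3).boxProd (pathGraph n)).Adj (a, j) u)
      = (({a+1, a+2} : Finset (Fin 3)) ×ˢ ({j} : Finset (Fin n)))
        ∪ (({a} : Finset (Fin 3)) ×ˢ T) := by
  ext ⟨b, x⟩
  simp only [mem_filter, mem_univ, true_and, boxProd_adj, cycleGraph_three_eq_top, top_adj,
    mem_union, Finset.mem_product, Finset.mem_insert, Finset.mem_singleton, hT]
  constructor
  · rintro (⟨hab, hjx⟩ | ⟨hadj, hab⟩)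
    · exact Or.inl ⟨(by revert hab; revert a b; decide :
        b ≠ a → b = a + 1 ∨ b = a + 2) (Ne.symm hab), hjx.symm⟩
    · exact Or.inr ⟨hab.symm, hadj⟩
  · rintro (⟨hb, hx⟩ | ⟨hb, hx⟩)
    · refine Or.inl ⟨?_, hx.symm⟩
      rcases hb with rfl | rfl
      · exact (by revert a; decide : ∀ a : Fin 3, a ≠ a + 1) a
      · exact (by revert a; decide : ∀ a : Fin 3, a ≠ a + 2) a
    · exact Or.inr ⟨hx, hb.symm⟩

private lemma sumCardNbr {n : ℕ} (g : Fin n → ℕ) (a : Fin 3) (j : Fin n) (T : Finset (Fin n))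
    (hT : ∀ x, (pathGraph n).Adj j x ↔ x ∈ T) :
    (∑ u ∈ univ.filter (fun u => ((cycleGraph 3).boxProd (pathGraph n)).Adj (a, j) u),
        g u.2 = 2 * g j + ∑ x ∈ T, g x) ∧
    (univ.filter (fun u => ((cycleGraph 3).boxProd (pathGraph n)).Adj (a, j) u)).card
      ≤ 2 + T.card := by
  have hd : ∀ a : Fin 3, a + 1 ≠ a ∧ a + 2 ≠ a ∧ a + 1 ≠ a + 2 := by decide
  rw [nbrFilter a j T hT]
  have hdisj : Disjoint (({a+1, a+2} : Finset (Fin 3)) ×ˢ ({j} : Finset (Fin n)))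
      (({a} : Finset (Fin 3)) ×ˢ T) := by
    rw [Finset.disjoint_left]
    rintro ⟨b, x⟩ hb hb'
    simp only [Finset.mem_product, Finset.mem_insert, Finset.mem_singleton] at hb hb'
    rcases hb.1 with rfl | rfl
    · exact (hd a).1 hb'.1
    · exact (hd a).2.1 hb'.1
  constructor
  · rw [Finset.sum_union hdisj, Finset.sum_product, Finset.sum_product]
    rw [Finset.sum_insert (by simpa using (hd a).2.2), Finset.sum_singleton,
      Finset.sum_singleton, Finset.sum_singleton, Finset.sum_singleton]
    ring
  · refine le_trans (Finset.card_union_le _ _) ?_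
    rw [Finset.card_product, Finset.card_product, Finset.card_singleton, Finset.card_singleton]
    have : ({a+1, a+2} : Finset (Fin 3)).card ≤ 2 :=
      le_trans (Finset.card_insert_le _ _) (by simp)
    omega

private lemma krdf_bound (n k C D : ℕ) (hn : 4 ≤ n)
    (hCk : C ≤ k+1) (hDk : D ≤ k+1)
    (h3 : k + 3 ≤ 3*D + C) (h4 : k + 4 ≤ 3*C + 2*min C D) :
    kRoman ((cycleGraph 3).boxProd (pathGraph n)) k ≤ 3*((n-2)*C + 2*D) := by
  set g : Fin n → ℕ := fun j => if (j:ℕ) = 0 ∨ (j:ℕ) = n-1 then D else C with hgdef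
  have hgmin : ∀ x : Fin n, min C D ≤ g x := by
    intro x; simp only [hgdef]; split <;> omega
  apply Nat.sInf_le
  refine ⟨fun p => g p.2, ⟨?_, ?_⟩, ?_⟩
  · intro v; simp only [hgdef]; split <;> omega
  · rintro ⟨a, j⟩ hv
    have hjlt := j.isLt
    have hmono : (univ.filter (fun u =>
          ((cycleGraph 3).boxProd (pathGraph n)).Adj (a, j) u ∧ 0 < g u.2)).card ≤
        (univ.filter (fun u => ((cycleGraph 3).boxProd (pathGraph n)).Adj (a, j) u)).card := by
      apply Finset.card_le_card
      intro u hu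
      simp only [mem_filter] at hu ⊢
      exact ⟨hu.1, hu.2.1⟩
    by_cases hj0 : (j:ℕ) = 0
    · obtain ⟨hsum, hcard⟩ := sumCardNbr g a j {(⟨1, by omega⟩ : Fin n)}
        (by intro x; simp only [pathGraph_adj, Finset.mem_singleton, Fin.ext_iff]; omega)
      rw [Finset.card_singleton] at hcard
      rw [Finset.sum_singleton] at hsum
      have hgj : g j = D := by simp [hgdef, hj0]
      have hg1 : g ⟨1, by omega⟩ = C := by simp only [hgdef]; rw [if_neg (by simp; omega)]
      simp only [hsum, hgj, hg1, ge_iff_le]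
      omega
    · by_cases hj1 : (j:ℕ) = n - 1
      · obtain ⟨hsum, hcard⟩ := sumCardNbr g a j {(⟨n-2, by omega⟩ : Fin n)}
          (by intro x; simp only [pathGraph_adj, Finset.mem_singleton, Fin.ext_iff]; omega)
        rw [Finset.card_singleton] at hcard
        rw [Finset.sum_singleton] at hsum
        have hgj : g j = D := by simp [hgdef, hj1]
        have hg1 : g ⟨n-2, by omega⟩ = C := by simp only [hgdef]; rw [if_neg (by simp; omega)]
        simp only [hsum, hgj, hg1, ge_iff_le]
        omega
      · obtain ⟨hsum, hcard⟩ := sumCardNbr g a j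
          {(⟨(j:ℕ)-1, by omega⟩ : Fin n), ⟨(j:ℕ)+1, by omega⟩}
          (by intro x
              simp only [pathGraph_adj, Finset.mem_insert, Finset.mem_singleton, Fin.ext_iff]
              omega)
        have hcard2 : ({(⟨(j:ℕ)-1, by omega⟩ : Fin n), ⟨(j:ℕ)+1, by omega⟩} :
            Finset (Fin n)).card ≤ 2 := le_trans (Finset.card_insert_le _ _) (by simp)
        rw [Finset.sum_insert (by simp only [Finset.mem_singleton, Fin.ext_iff]; omega),
          Finset.sum_singleton] at hsum
        have hgj : g j = C := by simp only [hgdef]; rw [if_neg (by omega)]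
        have hm1 := hgmin ⟨(j:ℕ)-1, by omega⟩
        have hm2 := hgmin ⟨(j:ℕ)+1, by omega⟩
        simp only [hsum, hgj, ge_iff_le]
        omega
  · rw [Fintype.sum_prod_type]
    have hPf : univ.filter (fun j : Fin n => (j:ℕ) = 0 ∨ (j:ℕ) = n-1)
        = {(⟨0, by omega⟩ : Fin n), ⟨n-1, by omega⟩} := by
      ext x
      simp only [mem_filter, mem_univ, true_and, Finset.mem_insert, Finset.mem_singleton,
        Fin.ext_iff]
    have h2 : (univ.filter (fun j : Fin n => (j:ℕ) = 0 ∨ (j:ℕ) = n-1)).card = 2 := by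
      rw [hPf, Finset.card_insert_of_notMem (by simp [Fin.ext_iff]; omega)]
      simp
    have hnc : (univ.filter (fun j : Fin n => ¬((j:ℕ) = 0 ∨ (j:ℕ) = n-1))).card = n - 2 := by
      have h := Finset.card_filter_add_card_filter_not (s := (univ : Finset (Fin n)))
        (p := fun j : Fin n => (j:ℕ) = 0 ∨ (j:ℕ) = n-1)
      rw [h2, Finset.card_univ, Fintype.card_fin] at h
      omega
    have hinner : ∑ j : Fin n, g j = (n-2)*C + 2*D := by
      show (∑ j : Fin n, if (j:ℕ) = 0 ∨ (j:ℕ) = n-1 then D else C) = _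
      rw [Finset.sum_ite, Finset.sum_const, Finset.sum_const, h2, hnc]
      simp [smul_eq_mul]
      ring
    rw [Finset.sum_congr rfl (fun a _ => hinner), Finset.sum_const, Finset.card_univ,
      Fintype.card_fin, smul_eq_mul]

theorem stmt13 (n k : ℕ) (hn : 4 ≤ n) (hk : 1 ≤ k) :
    (kRoman ((cycleGraph 3).boxProd (pathGraph n)) k : ℚ) ≤
        3 * ((n : ℚ) - 2) * ⌈((k : ℚ) + 4) / 5⌉ +
          6 * ⌈((k : ℚ) + 3 - ⌈((k : ℚ) + 4) / 5⌉) / 3⌉ ∧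
      3 * ((n : ℚ) - 2) * ⌈((k : ℚ) + 4) / 5⌉ +
          6 * ⌈((k : ℚ) + 3 - ⌈((k : ℚ) + 4) / 5⌉) / 3⌉ ≤
        (3 * n * k + 27 * n + 2 * k - 2) / 5 := by
  set C : ℕ := (k+8)/5 with hCdef
  set D : ℕ := (k+5-C)/3 with hDdef
  have hCk : C ≤ k+1 := by omega
  have hDk : D ≤ k+1 := by omega
  have h3 : k + 3 ≤ 3*D + C := by omega
  have h4 : k + 4 ≤ 3*C + 2*min C D := by omega
  have h5a : k + 4 ≤ 5*C := by omega
  have h5b : 5*C ≤ k+8 := by omega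
  have h6b : 3*D + C ≤ k + 5 := by omega
  have hceil1 : ⌈((k:ℚ)+4)/5⌉ = (C : ℤ) := by
    apply le_antisymm
    · rw [Int.ceil_le, div_le_iff₀ (by norm_num)]
      have : ((k+4 : ℕ) : ℚ) ≤ ((5*C : ℕ) : ℚ) := by exact_mod_cast h5a
      push_cast at this ⊢
      linarith
    · rw [Int.le_ceil_iff]
      push_cast
      rw [lt_div_iff₀ (by norm_num)]
      have : ((5*C : ℕ) : ℚ) ≤ ((k+8 : ℕ) : ℚ) := by exact_mod_cast h5b
      push_cast at this
      linarith
  have hceil2 : ⌈((k:ℚ) + 3 - ⌈((k:ℚ)+4)/5⌉)/3⌉ = (D : ℤ) := by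
    rw [hceil1]
    push_cast
    apply le_antisymm
    · rw [Int.ceil_le, div_le_iff₀ (by norm_num)]
      have : ((k+3 : ℕ) : ℚ) ≤ ((3*D + C : ℕ) : ℚ) := by exact_mod_cast h3
      push_cast at this ⊢
      linarith
    · rw [Int.le_ceil_iff]
      push_cast
      rw [lt_div_iff₀ (by norm_num)]
      have : ((3*D + C : ℕ) : ℚ) ≤ ((k+5 : ℕ) : ℚ) := by exact_mod_cast h6b
      push_cast at this
      linarith
  rw [hceil2, hceil1]
  have hb1 : 5*(C:ℚ) ≤ (k:ℚ)+8 := by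
    have : ((5*C : ℕ) : ℚ) ≤ ((k+8 : ℕ) : ℚ) := by exact_mod_cast h5b
    push_cast at this; linarith
  have hb2 : 3*(D:ℚ) + (C:ℚ) ≤ (k:ℚ)+5 := by
    have : ((3*D + C : ℕ) : ℚ) ≤ ((k+5 : ℕ) : ℚ) := by exact_mod_cast h6b
    push_cast at this; linarith
  have hbn : (4:ℚ) ≤ (n:ℚ) := by exact_mod_cast hn
  have hbk : (1:ℚ) ≤ (k:ℚ) := by exact_mod_cast hk
  constructor
  · have hmain := krdf_bound n k C D hn hCk hDk h3 h4
    have hcast : ((kRoman ((cycleGraph 3).boxProd (pathGraph n)) k : ℕ) : ℚ)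
        ≤ ((3*((n-2)*C + 2*D) : ℕ) : ℚ) := by exact_mod_cast hmain
    refine hcast.trans (le_of_eq ?_)
    push_cast [Nat.cast_sub (show 2 ≤ n by omega)]
    ring
  · push_cast
    nlinarith [mul_nonneg (show (0:ℚ) ≤ 3*(n:ℚ)-8 by linarith)
      (show (0:ℚ) ≤ (k:ℚ)+8-5*(C:ℚ) by linarith)]
end

section
/- For every integer n ≥ 1, the packing number of C_3 □ P_n equals ⌈n/2⌉. -/
open SimpleGraph Finset
open scoped Classical

/-!
Since `C₃` is the complete graph `K₃`, two vertices whose path coordinates differ by at most one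
have a common closed neighbour, so a packing meets each pair of columns `{2k, 2k + 1}` at most once.
Conversely, one vertex in every even column, alternating between two rows, is a packing.
-/

namespace SimpleGraph

variable {α β V : Type*}

lemma mem_closedNbr_boxProd (G : SimpleGraph α) (H : SimpleGraph β) (u w : α × β) :
    w ∈ closedNbr (G □ H) u ↔
      (w.1 = u.1 ∧ w.2 ∈ closedNbr H u.2) ∨ (w.2 = u.2 ∧ w.1 ∈ closedNbr G u.1) := by
  obtain ⟨a, b⟩ := u
  obtain ⟨x, y⟩ := w
  simp only [closedNbr, Set.mem_insert_iff, mem_neighborSet, boxProd_adj, Prod.mk.injEq]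
  grind

lemma closedNbr_top (a : α) : closedNbr (⊤ : SimpleGraph α) a = Set.univ := by
  ext x
  simp only [closedNbr, Set.mem_insert_iff, mem_neighborSet, top_adj, Set.mem_univ, iff_true]
  exact (eq_or_ne x a).imp id Ne.symm

lemma mem_closedNbr_pathGraph {n : ℕ} (i j : Fin n) :
    j ∈ closedNbr (pathGraph n) i ↔ (j : ℕ) ≤ i + 1 ∧ (i : ℕ) ≤ j + 1 := by
  simp only [closedNbr, Set.mem_insert_iff, mem_neighborSet, pathGraph_adj, Fin.ext_iff]
  omega

lemma packingNumber_eq [Fintype V] {G : SimpleGraph V} {m : ℕ}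
    (hex : ∃ S, IsPacking G S ∧ S.ncard = m) (hle : ∀ S, IsPacking G S → S.ncard ≤ m) :
    packingNumber G = m := by
  have hbdd : m ∈ upperBounds {k | ∃ S, IsPacking G S ∧ S.ncard = k} := by
    rintro _ ⟨S, hS, rfl⟩
    exact hle S hS
  exact le_antisymm (csSup_le ⟨m, hex⟩ hbdd) (le_csSup ⟨m, hbdd⟩ hex)

section CompleteBoxPath

variable {n : ℕ}

-- In a complete graph, `(u.1, v.2)` lies in both closed neighbourhoods unless the columns are far.
lemma IsPacking.column_sep {S : Set (α × Fin n)}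
    (hS : IsPacking ((⊤ : SimpleGraph α) □ pathGraph n) S)
    {u v : α × Fin n} (hu : u ∈ S) (hv : v ∈ S) (huv : u ≠ v) :
    (u.2 : ℕ) + 2 ≤ v.2 ∨ (v.2 : ℕ) + 2 ≤ u.2 := by
  by_contra! hnear
  refine Set.not_disjoint_iff.mpr ⟨(u.1, v.2), ?_, ?_⟩ (hS hu hv huv)
  · rw [mem_closedNbr_boxProd, mem_closedNbr_pathGraph]
    exact Or.inl ⟨rfl, by dsimp only; omega, by dsimp only; omega⟩
  · rw [mem_closedNbr_boxProd, closedNbr_top]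
    exact Or.inr ⟨rfl, Set.mem_univ _⟩

lemma IsPacking.ncard_le {S : Set (α × Fin n)}
    (hS : IsPacking ((⊤ : SimpleGraph α) □ pathGraph n) S) :
    S.ncard ≤ (n + 1) / 2 := by
  have hmaps :
      Set.MapsTo (fun u : α × Fin n => (u.2 : ℕ) / 2) S (Finset.range ((n + 1) / 2)) := by
    intro u _
    simp only [coe_range, Set.mem_Iio]
    omega
  have hinj : Set.InjOn (fun u : α × Fin n => (u.2 : ℕ) / 2) S := by
    intro u hu v hv (huv : (u.2 : ℕ) / 2 = v.2 / 2)
    by_contra hne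
    rcases hS.column_sep hu hv hne with h | h <;> omega
  simpa using Set.ncard_le_ncard_of_injOn _ hmaps hinj

def zigzag (a b : α) (n : ℕ) (i : Fin ((n + 1) / 2)) : α × Fin n :=
  (if Even (i : ℕ) then a else b, ⟨2 * i, by omega⟩)

lemma zigzag_injective (a b : α) (n : ℕ) : Function.Injective (zigzag a b n) := by
  intro i j hij
  have := congrArg (fun u => (u.2 : ℕ)) hij
  simp only [zigzag] at this
  omega

-- Neighbourhoods of consecutive chosen vertices can only meet in the column between them,
-- where they lie in the different rows `a` and `b`.
lemma isPacking_range_zigzag {a b : α} (hab : a ≠ b) :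
    IsPacking ((⊤ : SimpleGraph α) □ pathGraph n) (Set.range (zigzag a b n)) := by
  rintro _ ⟨i, rfl⟩ _ ⟨j, rfl⟩ hij
  have hij' : (i : ℕ) ≠ j := fun h => hij (congrArg _ (Fin.ext h))
  rw [Set.disjoint_left]
  intro w hwi hwj
  simp only [mem_closedNbr_boxProd, mem_closedNbr_pathGraph, zigzag, Fin.ext_iff] at hwi hwj
  have hrow : (if Even (i : ℕ) then a else b) = if Even (j : ℕ) then a else b := by
    rcases hwi with ⟨hi, _⟩ | ⟨hi, _⟩ <;> rcases hwj with ⟨hj, _⟩ | ⟨hj, _⟩ <;>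
      first | exact hi.symm.trans hj | omega
  have hparity : Even (i : ℕ) ↔ Even (j : ℕ) := by
    split_ifs at hrow <;> tauto
  have hconsec : (i : ℕ) + 1 = j ∨ (j : ℕ) + 1 = i := by
    rcases hwi with ⟨_, _⟩ | ⟨_, _⟩ <;> rcases hwj with ⟨_, _⟩ | ⟨_, _⟩ <;> omega
  rcases hconsec with h | h <;>
    simp only [← h, Nat.even_add_one, iff_not_self, not_iff_self] at hparity

theorem packingNumber_top_boxProd_pathGraph [Fintype α] [Nontrivial α] (n : ℕ) :
    packingNumber ((⊤ : SimpleGraph α) □ pathGraph n) = (n + 1) / 2 := by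
  obtain ⟨a, b, hab⟩ := exists_pair_ne α
  refine packingNumber_eq ⟨_, isPacking_range_zigzag hab, ?_⟩ fun S hS => hS.ncard_le
  rw [Set.ncard_range_of_injective (zigzag_injective a b n), Nat.card_eq_fintype_card,
    Fintype.card_fin]

end CompleteBoxPath

end SimpleGraph

lemma Rat.ceil_natCast_div_two (n : ℕ) : ⌈(n : ℚ) / 2⌉ = ((n + 1) / 2 : ℕ) := by
  have := Rat.ceil_natCast_div_natCast n 2
  push_cast at this ⊢
  omega

theorem stmt14_general (n : ℕ) :
    (packingNumber ((cycleGraph 3).boxProd (pathGraph n)) : ℤ) = ⌈(n : ℚ) / 2⌉ := by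
  rw [cycleGraph_three_eq_top, packingNumber_top_boxProd_pathGraph,
    Rat.ceil_natCast_div_two]

theorem stmt14 (n : ℕ) (hn : 1 ≤ n) :
    (packingNumber ((cycleGraph 3).boxProd (pathGraph n)) : ℤ) = ⌈(n : ℚ) / 2⌉ :=
  stmt14_general n
end

section
/- For every k ≥ 1 and n ≥ 4, γ_{[k]R}(C_4 □ P_n) ≤ 4(n−2)·⌈(k+4)/5⌉ + 8·⌈(k+3−⌈(k+4)/5⌉)/3⌉ < (12nk + 8k + 108n − 8)/15. -/
open SimpleGraph Finset
open scoped Classical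

/-- The weight function used for the upper bound. -/
def gfun18 (n A B : ℕ) : Fin 4 × Fin n → ℕ :=
  fun v => if v.2.1 = 0 ∨ v.2.1 = n-1 then B else A

lemma gfun18_apply (n A B : ℕ) (x : Fin 4) (z : Fin n) :
    gfun18 n A B (x, z) = if z.1 = 0 ∨ z.1 = n-1 then B else A := rfl

lemma keybound18 (n k : ℕ) (hn : 4 ≤ n) (hk : 1 ≤ k) (A B : ℕ)
    (hA : A = (k+8)/5) (hB : B = (k+5-A)/3) :
    kRoman ((cycleGraph 4).boxProd (pathGraph n)) k ≤ 4*(n-2)*A + 8*B := by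
  classical
  have cadj : ∀ a b : Fin 4, (cycleGraph 4).Adj a b ↔ ((a.1+1) % 4 = b.1 ∨ (b.1+1) % 4 = a.1) := by
    decide
  set G := (cycleGraph 4).boxProd (pathGraph n) with hG
  have hpos : ∀ v, 0 < gfun18 n A B v := by
    rintro ⟨x, z⟩; rw [gfun18_apply]; split_ifs <;> omega
  have hub : ∀ v, gfun18 n A B v ≤ k + 1 := by
    rintro ⟨x, z⟩; rw [gfun18_apply]; split_ifs <;> omega
  -- the KRDF property
  have hkrdf : IsKRDF G k (gfun18 n A B) := by
    refine ⟨hub, ?_⟩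
    rintro ⟨i, j⟩ -
    have hfilter : (univ.filter (fun u => G.Adj (i,j) u ∧ 0 < gfun18 n A B u)) =
        (univ.filter (fun u => G.Adj (i,j) u)) := by
      apply filter_congr
      intro u _
      simp [hpos u]
    rw [hfilter]
    have hi := i.isLt
    have hj := j.isLt
    by_cases h0 : j.1 = 0
    · -- left boundary
      have hN : (univ.filter (fun u => G.Adj (i,j) u)) =
          {((⟨(i.1+1)%4, by omega⟩ : Fin 4), j), ((⟨(i.1+3)%4, by omega⟩ : Fin 4), j),
           (i, (⟨1, by omega⟩ : Fin n))} := by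
        ext ⟨a, b⟩
        have ha := a.isLt
        have hb := b.isLt
        simp only [hG, mem_filter, mem_univ, true_and, boxProd_adj, pathGraph_adj, cadj,
          mem_insert, mem_singleton, Prod.mk.injEq, Fin.ext_iff, Fin.val_mk]
        omega
      have hm1 : ((⟨(i.1+1)%4, by omega⟩ : Fin 4), j) ∉
          ({((⟨(i.1+3)%4, by omega⟩ : Fin 4), j), (i, (⟨1, by omega⟩ : Fin n))} :
            Finset (Fin 4 × Fin n)) := by
        simp only [mem_insert, mem_singleton, Prod.mk.injEq, Fin.ext_iff, Fin.val_mk, not_or]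
        omega
      have hm2 : ((⟨(i.1+3)%4, by omega⟩ : Fin 4), j) ∉
          ({(i, (⟨1, by omega⟩ : Fin n))} : Finset (Fin 4 × Fin n)) := by
        simp only [mem_singleton, Prod.mk.injEq, Fin.ext_iff, Fin.val_mk, not_or]
        omega
      rw [hN, Finset.sum_insert hm1, Finset.sum_insert hm2, Finset.sum_singleton,
        Finset.card_insert_of_notMem hm1, Finset.card_insert_of_notMem hm2,
        Finset.card_singleton]
      simp only [gfun18_apply, Fin.val_mk, false_or, or_false]
      split_ifs <;> (try simp only [false_or] at *) <;> omega
    · by_cases h1 : j.1 = n - 1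
      · -- right boundary
        have hN : (univ.filter (fun u => G.Adj (i,j) u)) =
            {((⟨(i.1+1)%4, by omega⟩ : Fin 4), j), ((⟨(i.1+3)%4, by omega⟩ : Fin 4), j),
             (i, (⟨n-2, by omega⟩ : Fin n))} := by
          ext ⟨a, b⟩
          have ha := a.isLt
          have hb := b.isLt
          simp only [hG, mem_filter, mem_univ, true_and, boxProd_adj, pathGraph_adj, cadj,
            mem_insert, mem_singleton, Prod.mk.injEq, Fin.ext_iff, Fin.val_mk]
          omega
        have hm1 : ((⟨(i.1+1)%4, by omega⟩ : Fin 4), j) ∉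
            ({((⟨(i.1+3)%4, by omega⟩ : Fin 4), j), (i, (⟨n-2, by omega⟩ : Fin n))} :
              Finset (Fin 4 × Fin n)) := by
          simp only [mem_insert, mem_singleton, Prod.mk.injEq, Fin.ext_iff, Fin.val_mk, not_or]
          omega
        have hm2 : ((⟨(i.1+3)%4, by omega⟩ : Fin 4), j) ∉
            ({(i, (⟨n-2, by omega⟩ : Fin n))} : Finset (Fin 4 × Fin n)) := by
          simp only [mem_singleton, Prod.mk.injEq, Fin.ext_iff, Fin.val_mk, not_or]
          omega
        rw [hN, Finset.sum_insert hm1, Finset.sum_insert hm2, Finset.sum_singleton,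
          Finset.card_insert_of_notMem hm1, Finset.card_insert_of_notMem hm2,
          Finset.card_singleton]
        simp only [gfun18_apply, Fin.val_mk, false_or, or_false]
        split_ifs <;> (try simp only [false_or] at *) <;> omega
      · -- interior
        have hN : (univ.filter (fun u => G.Adj (i,j) u)) =
            {((⟨(i.1+1)%4, by omega⟩ : Fin 4), j), ((⟨(i.1+3)%4, by omega⟩ : Fin 4), j),
             (i, (⟨j.1-1, by omega⟩ : Fin n)), (i, (⟨j.1+1, by omega⟩ : Fin n))} := by
          ext ⟨a, b⟩
          have ha := a.isLt
          have hb := b.isLt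
          simp only [hG, mem_filter, mem_univ, true_and, boxProd_adj, pathGraph_adj, cadj,
            mem_insert, mem_singleton, Prod.mk.injEq, Fin.ext_iff, Fin.val_mk]
          omega
        have hm1 : ((⟨(i.1+1)%4, by omega⟩ : Fin 4), j) ∉
            ({((⟨(i.1+3)%4, by omega⟩ : Fin 4), j),
              (i, (⟨j.1-1, by omega⟩ : Fin n)), (i, (⟨j.1+1, by omega⟩ : Fin n))} :
              Finset (Fin 4 × Fin n)) := by
          simp only [mem_insert, mem_singleton, Prod.mk.injEq, Fin.ext_iff, Fin.val_mk, not_or]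
          omega
        have hm2 : ((⟨(i.1+3)%4, by omega⟩ : Fin 4), j) ∉
            ({(i, (⟨j.1-1, by omega⟩ : Fin n)), (i, (⟨j.1+1, by omega⟩ : Fin n))} :
              Finset (Fin 4 × Fin n)) := by
          simp only [mem_insert, mem_singleton, Prod.mk.injEq, Fin.ext_iff, Fin.val_mk, not_or]
          omega
        have hm3 : (i, (⟨j.1-1, by omega⟩ : Fin n)) ∉
            ({(i, (⟨j.1+1, by omega⟩ : Fin n))} : Finset (Fin 4 × Fin n)) := by
          simp only [mem_singleton, Prod.mk.injEq, Fin.ext_iff, Fin.val_mk, not_or]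
          omega
        rw [hN, Finset.sum_insert hm1, Finset.sum_insert hm2, Finset.sum_insert hm3,
          Finset.sum_singleton, Finset.card_insert_of_notMem hm1,
          Finset.card_insert_of_notMem hm2, Finset.card_insert_of_notMem hm3,
          Finset.card_singleton]
        simp only [gfun18_apply, Fin.val_mk, false_or, or_false]
        split_ifs <;> (try simp only [false_or] at *) <;> omega
  -- total weight
  have hsum : ∑ v, gfun18 n A B v = 4*(n-2)*A + 8*B := by
    rw [Fintype.sum_prod_type]
    have hinner : ∀ x : Fin 4, ∑ z : Fin n, gfun18 n A B (x, z) = (n-2)*A + 2*B := by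
      intro x
      simp only [gfun18_apply]
      rw [Finset.sum_ite, Finset.sum_const, Finset.sum_const, smul_eq_mul, smul_eq_mul]
      have hP : (univ.filter (fun z : Fin n => z.1 = 0 ∨ z.1 = n-1)) =
          {(⟨0, by omega⟩ : Fin n), (⟨n-1, by omega⟩ : Fin n)} := by
        ext z
        have hz := z.isLt
        simp only [mem_filter, mem_univ, true_and, mem_insert, mem_singleton, Fin.ext_iff,
          Fin.val_mk]
      have hmP : (⟨0, by omega⟩ : Fin n) ∉ ({(⟨n-1, by omega⟩ : Fin n)} : Finset (Fin n)) := by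
        simp only [mem_singleton, Fin.ext_iff, Fin.val_mk]
        omega
      have hcardP : (univ.filter (fun z : Fin n => z.1 = 0 ∨ z.1 = n-1)).card = 2 := by
        rw [hP, Finset.card_insert_of_notMem hmP, Finset.card_singleton]
      have hcardQ : (univ.filter (fun z : Fin n => ¬(z.1 = 0 ∨ z.1 = n-1))).card = n - 2 := by
        have := Finset.card_filter_add_card_filter_not
          (s := (univ : Finset (Fin n))) (p := fun z : Fin n => z.1 = 0 ∨ z.1 = n-1)
        rw [Finset.card_univ, Fintype.card_fin] at this
        omega
      rw [hcardP, hcardQ]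
      omega
    rw [Finset.sum_congr rfl (fun x _ => hinner x), Finset.sum_const, Finset.card_univ,
      Fintype.card_fin, smul_eq_mul]
    ring
  calc kRoman G k ≤ ∑ v, gfun18 n A B v := Nat.sInf_le ⟨gfun18 n A B, hkrdf, rfl⟩
    _ = _ := hsum

theorem stmt18 (n k : ℕ) (hn : 4 ≤ n) (hk : 1 ≤ k) :
    (kRoman ((cycleGraph 4).boxProd (pathGraph n)) k : ℚ) ≤
        4 * ((n : ℚ) - 2) * ⌈((k : ℚ) + 4) / 5⌉ +
          8 * ⌈((k : ℚ) + 3 - ⌈((k : ℚ) + 4) / 5⌉) / 3⌉ ∧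
      4 * ((n : ℚ) - 2) * ⌈((k : ℚ) + 4) / 5⌉ +
          8 * ⌈((k : ℚ) + 3 - ⌈((k : ℚ) + 4) / 5⌉) / 3⌉ <
        (12 * n * k + 8 * k + 108 * n - 8) / 15 := by
  set A : ℕ := (k+8)/5 with hA
  set B : ℕ := (k+5-A)/3 with hB
  have hA1 : 5 * A ≤ k + 8 := by omega
  have hA2 : k + 4 ≤ 5 * A := by omega
  have hAk : A ≤ k + 2 := by omega
  have hB1 : 3 * B ≤ k + 5 - A := by omega
  have hB2 : k + 3 ≤ 3 * B + A := by omega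
  have hA1q : 5 * (A:ℚ) ≤ (k:ℚ) + 8 := by exact_mod_cast hA1
  have hA2q : (k:ℚ) + 4 ≤ 5 * (A:ℚ) := by exact_mod_cast hA2
  have hB1q : 3 * (B:ℚ) ≤ (k:ℚ) + 5 - A := by
    have : (3 * B : ℕ) ≤ (k + 5 : ℕ) - A := hB1
    have h' : (3 * B : ℕ) + A ≤ k + 5 := by omega
    have := (Nat.cast_le (α := ℚ)).2 h'
    push_cast at this
    linarith
  have hB2q : (k:ℚ) + 3 ≤ 3 * (B:ℚ) + A := by exact_mod_cast hB2
  have hceilA : ⌈((k : ℚ) + 4) / 5⌉ = (A : ℤ) := by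
    rw [Int.ceil_eq_iff]
    constructor
    · rw [lt_div_iff₀ (by norm_num : (0:ℚ) < 5)]
      push_cast
      linarith
    · rw [div_le_iff₀ (by norm_num : (0:ℚ) < 5)]
      push_cast
      linarith
  have hceilB : ⌈((k : ℚ) + 3 - ⌈((k : ℚ) + 4) / 5⌉) / 3⌉ = (B : ℤ) := by
    rw [hceilA, Int.ceil_eq_iff]
    push_cast
    constructor
    · rw [lt_div_iff₀ (by norm_num : (0:ℚ) < 3)]
      linarith
    · rw [div_le_iff₀ (by norm_num : (0:ℚ) < 3)]
      linarith
  have hkey := keybound18 n k hn hk A B hA hB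
  have hnq : (4:ℚ) ≤ (n:ℚ) := by exact_mod_cast hn
  have hcast : ((4*(n-2)*A + 8*B : ℕ) : ℚ) = 4 * ((n:ℚ) - 2) * A + 8 * B := by
    have h2n : 2 ≤ n := by omega
    push_cast [Nat.cast_sub h2n]
    ring
  constructor
  · rw [hceilB, hceilA]
    push_cast
    calc (kRoman ((cycleGraph 4).boxProd (pathGraph n)) k : ℚ)
        ≤ ((4*(n-2)*A + 8*B : ℕ) : ℚ) := by exact_mod_cast hkey
      _ = 4 * ((n:ℚ) - 2) * A + 8 * B := hcast
  · rw [hceilB, hceilA]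
    push_cast
    rw [lt_div_iff₀ (by norm_num : (0:ℚ) < 15)]
    nlinarith [mul_nonneg (by linarith : (0:ℚ) ≤ (n:ℚ) - 2)
      (by linarith : (0:ℚ) ≤ (k:ℚ) + 8 - 5*(A:ℚ))]
end
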